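/- arXiv:1012.2176 — 7 statements merged into one kernel-verified Lean document; each statement's English description precedes it below -/
import Mathlib

section
/- Assume moreover that Tor₁^R(S, S) = 0. Then the R-linear map θ : S ⊗_R S' → Hom_R(S, S/R) determined by s ⊗ f ↦ (t ↦ f(π(t·s))) is bijective, and it sends 1 ⊗ id_{S/R} to the canonical projection π : S → S/R. -/
/-!
`θ` factors as `S ⊗ End_R(S/R) → S ⊗ Hom_R(S, S/R) → Hom_R(S, S/R)`, the second map being
`s ⊗ g ↦ g (· * s)`. Since `R → S` is an epimorphism, `1 ⊗ s = s ⊗ 1` in `S ⊗_R S`; this makes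
the second map bijective and kills `S ⊗_R S/R`. Tensoring the exact sequence
`0 → End_R(S/R) → Hom_R(S, S/R) → S/R → 0` (evaluation at `1`) with `S` therefore shows that the
first map is surjective, and it is injective because `Tor₁^R(S, S/R) = 0`: the long exact Tor
sequence of `R → S → S/R → 0` deduces this from `Tor₁^R(S, S) = 0` and the injectivity of
`S ⊗ R → S ⊗ S`.
-/

open CategoryTheory TensorProduct

universe u

section TorOne

variable (R : Type*) [CommRing R] (M : Type*) [AddCommGroup M] [Module R M]

/-- `Tor₁^R(M, C) = 0`, witnessed by a single projective presentation `0 → ker q → F → C → 0`. -/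
def TorOneVanishes (C : Type u) [AddCommGroup C] [Module R C] : Prop :=
  ∃ (F : Type u) (_ : AddCommGroup F) (_ : Module R F) (_ : Module.Projective R F)
    (q : F →ₗ[R] C), Function.Surjective q ∧
      Function.Injective ((LinearMap.ker q).subtype.lTensor M)

variable {R M}
variable {A N : Type*} {B C : Type u} [AddCommGroup A] [AddCommGroup B] [AddCommGroup C]
  [AddCommGroup N] [Module R A] [Module R B] [Module R C] [Module R N]
  {f : A →ₗ[R] B} {g : B →ₗ[R] C}

theorem Function.Exact.exists_comp_eq_of_comp_eq_zero (hfg : Function.Exact f g)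
    (hf : Function.Injective f) (h : N →ₗ[R] B) (hh : g ∘ₗ h = 0) :
    ∃ h' : N →ₗ[R] A, f ∘ₗ h' = h := by
  have hmem (n : N) : h n ∈ LinearMap.range f := by
    rw [← hfg.linearMap_ker_eq, LinearMap.mem_ker, ← LinearMap.comp_apply, hh,
      LinearMap.zero_apply]
  refine ⟨(LinearEquiv.ofInjective f hf).symm ∘ₗ h.codRestrict _ hmem, ?_⟩
  ext n
  simp

theorem Function.Exact.surjective_codRestrict_ker (hfg : Function.Exact f g) :
    Function.Surjective (f.codRestrict (LinearMap.ker g) hfg.apply_apply_eq_zero) := by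
  rintro ⟨y, hy⟩
  obtain ⟨x, rfl⟩ := (hfg y).mp hy
  exact ⟨x, rfl⟩

theorem TorOneVanishes.lTensor_injective (hC : TorOneVanishes R M C)
    (hf : Function.Injective f) (hfg : Function.Exact f g)
    (hg : Function.Surjective g) : Function.Injective (f.lTensor M) := by
  obtain ⟨F, _, _, _, q, hq, hker⟩ := hC
  obtain ⟨σ, hσ⟩ := Module.projective_lifting_property g q hg
  obtain ⟨σ', hσ'⟩ := hfg.exists_comp_eq_of_comp_eq_zero hf (σ ∘ₗ (LinearMap.ker q).subtype)
    (by ext ⟨x, hx⟩; simpa [← LinearMap.comp_apply, hσ] using hx)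
  -- `B` is the pushout of `A ← ker q → F`, whence the right exact sequence below
  let ψ : LinearMap.ker q →ₗ[R] A × F := σ'.prod (-(LinearMap.ker q).subtype)
  let φ : A × F →ₗ[R] B := f.coprod σ
  have hψφ : Function.Exact ψ φ := by
    intro y
    constructor
    · intro h
      have h' : f y.1 + σ y.2 = 0 := h
      have hx : -y.2 ∈ LinearMap.ker q := by
        have := congrArg g h'
        rw [map_add, hfg.apply_apply_eq_zero, zero_add, ← LinearMap.comp_apply, hσ] at this
        simpa using this
      refine ⟨⟨-y.2, hx⟩, Prod.ext (hf ?_) (neg_neg y.2)⟩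
      have := LinearMap.congr_fun hσ' ⟨-y.2, hx⟩
      simp only [LinearMap.comp_apply, Submodule.coe_subtype, map_neg] at this
      change f (σ' _) = _
      rw [this, neg_eq_iff_add_eq_zero, add_comm, h']
    · rintro ⟨n, rfl⟩
      simp [ψ, φ, ← LinearMap.comp_apply, hσ']
  have hφ : Function.Surjective φ := by
    intro b
    obtain ⟨x, hx⟩ := hq (g b)
    obtain ⟨a, ha⟩ := (hfg (b - σ x)).mp (by
      rw [map_sub, ← LinearMap.comp_apply, hσ, hx, sub_self])
    exact ⟨(a, x), by simp [φ, ha]⟩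
  rw [← LinearMap.ker_eq_bot, LinearMap.ker_eq_bot']
  intro x hx
  obtain ⟨y, hy⟩ := (lTensor_exact M hψφ hφ (LinearMap.inl R A F |>.lTensor M x)).mp (by
    rw [← LinearMap.lTensor_comp_apply]; simpa [φ] using hx)
  have hy0 : y = 0 := hker <| by
    have := congrArg ((LinearMap.snd R A F).lTensor M) hy
    rw [← LinearMap.lTensor_comp_apply, ← LinearMap.lTensor_comp_apply] at this
    simpa [ψ] using this
  have := congrArg ((LinearMap.fst R A F).lTensor M) hy
  rwa [hy0, map_zero, map_zero, ← LinearMap.lTensor_comp_apply, LinearMap.fst_comp_inl,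
    LinearMap.lTensor_id_apply, eq_comm] at this

theorem TorOneVanishes.of_exact (hB : TorOneVanishes R M B) (hfg : Function.Exact f g)
    (hg : Function.Surjective g) (hf : Function.Injective (f.lTensor M)) :
    TorOneVanishes R M C := by
  obtain ⟨F, _, _, _, q, hq, hker⟩ := hB
  refine ⟨F, _, _, inferInstance, g ∘ₗ q, hg.comp hq, ?_⟩
  -- `0 → ker q → ker (g ∘ q) → ker g → 0` is exact, and `M ⊗ ker g → M ⊗ B` is injective
  -- because `M ⊗ A` maps onto `M ⊗ ker g`.
  let i := Submodule.inclusion (LinearMap.ker_le_ker_comp q g)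
  let r : LinearMap.ker (g ∘ₗ q) →ₗ[R] LinearMap.ker g := q.restrict fun _ hx ↦ hx
  have hir : Function.Exact i r := by
    rintro ⟨x, hx⟩
    constructor
    · intro h
      exact ⟨⟨x, congrArg Subtype.val h⟩, rfl⟩
    · rintro ⟨⟨y, hy⟩, h⟩
      cases congrArg Subtype.val h
      exact Subtype.ext hy
  have hr : Function.Surjective r := by
    rintro ⟨y, hy⟩
    obtain ⟨x, rfl⟩ := hq y
    exact ⟨⟨x, hy⟩, rfl⟩
  have hkerg : Function.Injective ((LinearMap.ker g).subtype.lTensor M) := by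
    refine Function.Injective.of_comp_right ?_
      (LinearMap.lTensor_surjective M hfg.surjective_codRestrict_ker)
    rwa [← LinearMap.coe_comp, ← LinearMap.lTensor_comp]
  refine (injective_iff_map_eq_zero _).mpr fun z hz ↦ ?_
  have hrz : r.lTensor M z = 0 := hkerg <| by
    rw [← LinearMap.lTensor_comp_apply, map_zero]
    exact (LinearMap.lTensor_comp_apply M q _ z).trans (by rw [hz, map_zero])
  obtain ⟨y, rfl⟩ := (lTensor_exact M hir hr z).mp hrz
  have hy : y = 0 := hker <| by
    rw [map_zero, ← hz, ← LinearMap.lTensor_comp_apply]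
    rfl
  rw [hy, map_zero]

theorem TorOneVanishes.of_exact_lTensor {X₂ X₁ : Type*} {X₀ : Type u} [AddCommGroup X₂]
    [AddCommGroup X₁] [AddCommGroup X₀] [Module R X₂] [Module R X₁] [Module R X₀]
    [Module.Projective R X₀] {d₂ : X₂ →ₗ[R] X₁} {d₁ : X₁ →ₗ[R] X₀} {q : X₀ →ₗ[R] C}
    (hd : d₁ ∘ₗ d₂ = 0) (hd₁q : Function.Exact d₁ q) (hq : Function.Surjective q)
    (hM : Function.Exact (d₂.lTensor M) (d₁.lTensor M)) :
    TorOneVanishes R M C := by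
  refine ⟨X₀, _, _, inferInstance, q, hq, (injective_iff_map_eq_zero _).mpr fun z hz ↦ ?_⟩
  obtain ⟨w, rfl⟩ := LinearMap.lTensor_surjective M hd₁q.surjective_codRestrict_ker z
  obtain ⟨v, rfl⟩ := (hM w).mp (by rwa [← LinearMap.lTensor_comp_apply] at hz)
  have : d₁.codRestrict (LinearMap.ker q) hd₁q.apply_apply_eq_zero ∘ₗ d₂ = 0 := by
    ext x
    exact LinearMap.congr_fun hd x
  rw [← LinearMap.lTensor_comp_apply, this, LinearMap.lTensor_zero, LinearMap.zero_apply]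

theorem torOneVanishes_of_isZero_tor {R M C : Type u} [CommRing R] [AddCommGroup M] [Module R M]
    [AddCommGroup C] [Module R C]
    (h : Limits.IsZero (((Tor (ModuleCat.{u} R) 1).obj (ModuleCat.of R M)).obj
      (ModuleCat.of R C))) :
    TorOneVanishes R M C := by
  let P := projectiveResolution (ModuleCat.of R C)
  let T := (MonoidalCategory.tensoringLeft (ModuleCat.{u} R)).obj (ModuleCat.of R M)
  have hT : ((T.mapHomologicalComplex _).obj P.complex).ExactAt 1 :=
    (HomologicalComplex.exactAt_iff_isZero_homology _ _).mpr
      (h.of_iso (P.isoLeftDerivedObj T 1).symm)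
  have := (IsProjective.iff_projective _).mpr (P.projective 0)
  exact TorOneVanishes.of_exact_lTensor (d₂ := (P.complex.d 2 1).hom)
    (congrArg ModuleCat.Hom.hom (P.complex.d_comp_d 2 1 0))
    ((ShortComplex.ShortExact.moduleCat_exact_iff_function_exact _).mp P.exact₀)
    ((ModuleCat.epi_iff_surjective _).mp inferInstance)
    ((ShortComplex.ShortExact.moduleCat_exact_iff_function_exact _).mp
      ((HomologicalComplex.exactAt_iff' _ 2 1 0 (by simp) (by simp)).mp hT))

end TorOne

namespace Algebra

theorem isEpi_of_forall_comp_algebraMap_eq {R S : Type u} [CommRing R] [CommRing S]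
    [Algebra R S]
    (hepi : ∀ (T : Type u) [Ring T] (g₁ g₂ : S →+* T),
      g₁.comp (algebraMap R S) = g₂.comp (algebraMap R S) → g₁ = g₂) :
    Algebra.IsEpi R S := by
  refine (isEpi_iff_forall_one_tmul_eq R S).mpr fun a ↦ ?_
  have h := hepi (S ⊗[R] S) TensorProduct.includeRight.toRingHom TensorProduct.includeLeftRingHom
    (by
      ext r
      change (1 : S) ⊗ₜ[R] algebraMap R S r = algebraMap R S r ⊗ₜ 1
      rw [algebraMap_eq_smul_one, ← smul_tmul])
  simpa using congr($h a)

variable {R S : Type*} [CommRing R] [CommRing S] [Algebra R S]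

theorem lTensor_linearMap_injective :
    Function.Injective ((Algebra.linearMap R S).lTensor S) := by
  have : LinearMap.mul' R S ∘ₗ (Algebra.linearMap R S).lTensor S =
      _root_.TensorProduct.rid R S := by
    ext s
    simp
  refine Function.Injective.of_comp (f := LinearMap.mul' R S) ?_
  rw [← LinearMap.coe_comp, this]
  exact (_root_.TensorProduct.rid R S).injective

theorem exact_lcomp_mkQ_applyₗ_one (N : Type*) [AddCommGroup N] [Module R N] :
    Function.Exact (LinearMap.lcomp R N (LinearMap.range (Algebra.linearMap R S)).mkQ)
      (LinearMap.applyₗ (R := R) (M₂ := N) (1 : S)) := by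
  have : LinearMap.applyₗ (R := R) (M₂ := N) (1 : S) =
      (LinearMap.ringLmapEquivSelf R R N).toLinearMap ∘ₗ
        LinearMap.lcomp R N (Algebra.linearMap R S) := by
    ext
    simp
  rw [this, LinearEquiv.postcomp_exact_iff_exact]
  exact LinearMap.exact_lcomp_of_exact_of_surjective N (LinearMap.exact_map_mkQ_range _)
    (Submodule.mkQ_surjective _)

theorem surjective_applyₗ_one_quotient :
    Function.Surjective
      (LinearMap.applyₗ (R := R) (M₂ := S ⧸ LinearMap.range (Algebra.linearMap R S)) (1 : S)) := by
  intro n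
  obtain ⟨u, rfl⟩ := Submodule.mkQ_surjective _ n
  exact ⟨Submodule.mkQ _ ∘ₗ LinearMap.mulRight R u, by simp⟩

variable (R S) in
def precompMulRight (M : Type*) [AddCommGroup M] [Module R M] :
    S ⊗[R] (S →ₗ[R] M) →ₗ[R] (S →ₗ[R] M) :=
  lift ((LinearMap.llcomp R S S M).flip ∘ₗ (LinearMap.mul R S).flip)

@[simp]
theorem precompMulRight_tmul {M : Type*} [AddCommGroup M] [Module R M] (u : S)
    (g : S →ₗ[R] M) :
    precompMulRight R S M (u ⊗ₜ g) = g ∘ₗ LinearMap.mulRight R u :=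
  rfl

variable [Algebra.IsEpi R S]

theorem IsEpi.one_tmul_eq (a : S) : 1 ⊗ₜ[R] a = a ⊗ₜ 1 :=
  (isEpi_iff_forall_one_tmul_eq R S).mp inferInstance a

theorem IsEpi.tmul_eq_mul_tmul_one (u v : S) : u ⊗ₜ[R] v = (u * v) ⊗ₜ 1 := by
  calc u ⊗ₜ[R] v = u ⊗ₜ 1 * 1 ⊗ₜ v := by simp
    _ = u ⊗ₜ 1 * v ⊗ₜ 1 := by rw [IsEpi.one_tmul_eq]
    _ = (u * v) ⊗ₜ 1 := by simp

instance IsEpi.subsingleton_tensorProduct_quotient :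
    Subsingleton (S ⊗[R] (S ⧸ LinearMap.range (Algebra.linearMap R S))) := by
  refine subsingleton_of_forall_eq 0 fun x ↦ ?_
  induction x using TensorProduct.induction_on with
  | zero => rfl
  | add x y hx hy => rw [hx, hy, add_zero]
  | tmul u n =>
    obtain ⟨v, rfl⟩ := Submodule.mkQ_surjective _ n
    rw [← LinearMap.lTensor_tmul, IsEpi.tmul_eq_mul_tmul_one, LinearMap.lTensor_tmul,
      Submodule.mkQ_apply, (Submodule.Quotient.mk_eq_zero _).mpr (LinearMap.mem_range.mpr ⟨1, by simp⟩),
      tmul_zero]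

theorem IsEpi.bijective_precompMulRight (M : Type*) [AddCommGroup M] [Module R M] :
    Function.Bijective (precompMulRight R S M) := by
  refine Function.bijective_iff_has_inverse.mpr ⟨fun g ↦ 1 ⊗ₜ g, fun w ↦ ?_, fun g ↦ ?_⟩
  · induction w using TensorProduct.induction_on with
    | zero => simp
    | add x y hx hy => simp only [map_add, tmul_add, hx, hy]
    | tmul u g =>
      let ψ : S →ₗ[R] S →ₗ[R] M := LinearMap.llcomp R S S M g ∘ₗ (LinearMap.mul R S).flip
      have hψ : ψ 1 = g := by ext; simp [ψ]
      calc (1 : S) ⊗ₜ[R] ψ u = _root_.TensorProduct.map LinearMap.id ψ (u ⊗ₜ 1) := by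
            rw [← IsEpi.one_tmul_eq]; rfl
        _ = u ⊗ₜ g := by rw [map_tmul, hψ]; rfl
  · ext t
    simp

end Algebra

theorem stmt_3_general {R S : Type u} [CommRing R] [CommRing S] [Algebra R S]
    (hepi : ∀ (T : Type u) [Ring T] (g₁ g₂ : S →+* T),
      g₁.comp (algebraMap R S) = g₂.comp (algebraMap R S) → g₁ = g₂)
    (htor : Limits.IsZero
      (((Tor (ModuleCat.{u} R) 1).obj (ModuleCat.of R S)).obj (ModuleCat.of R S))) :
    ∃ θ : (S ⊗[R] Module.End R (S ⧸ LinearMap.range (Algebra.linearMap R S))) →ₗ[R]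
        (S →ₗ[R] (S ⧸ LinearMap.range (Algebra.linearMap R S))),
      (∀ (s : S) (f : Module.End R (S ⧸ LinearMap.range (Algebra.linearMap R S))) (t : S),
          θ (s ⊗ₜ[R] f) t = f ((LinearMap.range (Algebra.linearMap R S)).mkQ (t * s))) ∧
      Function.Bijective θ ∧
      θ ((1 : S) ⊗ₜ[R]
          (LinearMap.id : Module.End R (S ⧸ LinearMap.range (Algebra.linearMap R S))))
        = (LinearMap.range (Algebra.linearMap R S)).mkQ := by
  have := Algebra.isEpi_of_forall_comp_algebraMap_eq hepi
  set Λ := LinearMap.range (Algebra.linearMap R S)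
  have hexact := Algebra.exact_lcomp_mkQ_applyₗ_one (R := R) (S := S) (S ⧸ Λ)
  have hev := Algebra.surjective_applyₗ_one_quotient (R := R) (S := S)
  have hTor : TorOneVanishes R S (S ⧸ Λ) :=
    (torOneVanishes_of_isZero_tor htor).of_exact (LinearMap.exact_map_mkQ_range _)
      (Submodule.mkQ_surjective _) Algebra.lTensor_linearMap_injective
  refine ⟨Algebra.precompMulRight R S _ ∘ₗ (LinearMap.lcomp R _ Λ.mkQ).lTensor S,
    fun _ _ _ ↦ rfl, (Algebra.IsEpi.bijective_precompMulRight _).comp ⟨?_, ?_⟩, ?_⟩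
  · exact hTor.lTensor_injective (LinearMap.lcomp_injective_of_surjective _ Λ.mkQ_surjective)
      hexact hev
  · exact fun y ↦ (lTensor_exact S hexact hev y).mp (Subsingleton.elim _ _)
  · ext t
    simp

/-- Let `λ = algebraMap R S` be an injective ring epimorphism between commutative rings with
`Tor₁^R(S, S) = 0`.  Write `S/R` for the quotient `R`-module `S ⧸ λ(R)` with projection `π`,
and `S' = End_R(S/R)`.  Then the `R`-linear map `θ : S ⊗_R S' → Hom_R(S, S/R)` determined by
`s ⊗ f ↦ (t ↦ f (π (t * s)))` is bijective and sends `1 ⊗ id` to `π`. -/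
theorem stmt_3 {R S : Type u} [CommRing R] [CommRing S] [Algebra R S]
    (hinj : Function.Injective (algebraMap R S))
    (hepi : ∀ (T : Type u) [Ring T] (g₁ g₂ : S →+* T),
      g₁.comp (algebraMap R S) = g₂.comp (algebraMap R S) → g₁ = g₂)
    (htor : Limits.IsZero
      (((Tor (ModuleCat.{u} R) 1).obj (ModuleCat.of R S)).obj (ModuleCat.of R S))) :
    ∃ θ : (S ⊗[R] Module.End R (S ⧸ LinearMap.range (Algebra.linearMap R S))) →ₗ[R]
        (S →ₗ[R] (S ⧸ LinearMap.range (Algebra.linearMap R S))),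
      (∀ (s : S) (f : Module.End R (S ⧸ LinearMap.range (Algebra.linearMap R S))) (t : S),
          θ (s ⊗ₜ[R] f) t = f ((LinearMap.range (Algebra.linearMap R S)).mkQ (t * s))) ∧
      Function.Bijective θ ∧
      θ ((1 : S) ⊗ₜ[R]
          (LinearMap.id : Module.End R (S ⧸ LinearMap.range (Algebra.linearMap R S))))
        = (LinearMap.range (Algebra.linearMap R S)).mkQ :=
  stmt_3_general hepi htor
end

section
/- Assume moreover that Tor₁^R(S, S) = 0. Then: (a) the map λ' : S' → S ⊗_R S' defined by f ↦ 1 ⊗ f is injective; (b) the sequence 0 → S' → S ⊗_R S' → (S/R) ⊗_R S' → 0, with first map λ' and second map π ⊗ id_{S'}, is an exact sequence of R-modules; and (c) the evaluation map ψ : (S/R) ⊗_R S' → S/R defined by y ⊗ g ↦ g(y) is bijective. -/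
open CategoryTheory Function TensorProduct

universe u

/-!
Write `K = S/R`, `B = End_R K` and `H = Hom_R(S, K)`. Precomposition with `π` and evaluation at
`1` form a short exact sequence `0 → B → H → K → 0`. Comparing it with `0 → L → P₀ → K → 0`, where
`P₀ → S` starts a projective resolution of `S` and `L` is the preimage of `R`, shows that
`S ⊗ B → S ⊗ H` is injective as soon as `S ⊗ L → S ⊗ P₀` is; the latter follows from
`Tor₁^R(S, S) = 0` (injectivity of `S ⊗ ker(P₀ → S) → S ⊗ P₀`) together with `S ⊗ R ↪ S ⊗ S`.
Since `R → S` is an epimorphism, `S ⊗ H → H`, `s ⊗ φ ↦ φ ∘ (s * ·)`, is injective too, so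
`S ⊗ B` embeds into `H` with `1 ⊗ g ↦ g ∘ π`. Evaluating this embedding at `1` gives
`ψ ∘ (π ⊗ id)`, hence whatever `ψ ∘ (π ⊗ id)` kills is of the form `1 ⊗ g`: this is exactness in
the middle and injectivity of `ψ`.
-/

namespace LinearMap

variable {R : Type*} [CommRing R] {N : Type*} [AddCommGroup N] [Module R N]

theorem lTensor_ker_subtype_injective_of_exact {P₀ P₁ P₂ M : Type*}
    [AddCommGroup P₀] [Module R P₀] [AddCommGroup P₁] [Module R P₁]
    [AddCommGroup P₂] [Module R P₂] [AddCommGroup M] [Module R M]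
    {d₂ : P₂ →ₗ[R] P₁} {d₁ : P₁ →ₗ[R] P₀} {p : P₀ →ₗ[R] M}
    (h₂₁ : Exact d₂ d₁) (h₁₀ : Exact d₁ p) (hN : Exact (lTensor N d₂) (lTensor N d₁)) :
    Injective (lTensor N (ker p).subtype) := by
  let d : P₁ →ₗ[R] ker p := d₁.codRestrict (ker p) h₁₀.apply_apply_eq_zero
  have hd : Surjective d := fun ⟨y, hy⟩ ↦
    let ⟨x, hx⟩ := (h₁₀ y).1 hy
    ⟨x, Subtype.ext hx⟩
  have hd₂d : Exact d₂ d := fun x ↦ Submodule.coe_eq_zero.symm.trans (h₂₁ x)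
  rw [injective_iff_map_eq_zero]
  intro w hw
  obtain ⟨v, rfl⟩ := lTensor_surjective N hd w
  have hd₁ : (ker p).subtype ∘ₗ d = d₁ := subtype_comp_codRestrict _ _ _
  rw [← lTensor_comp_apply, hd₁] at hw
  obtain ⟨u, rfl⟩ := (hN v).1 hw
  exact (lTensor_exact N hd₂d hd).apply_apply_eq_zero u

theorem lTensor_coprod_injective {A Q P M : Type*}
    [AddCommGroup A] [Module R A] [AddCommGroup Q] [Module R Q]
    [AddCommGroup P] [Module R P] [AddCommGroup M] [Module R M]
    {u : A →ₗ[R] P} {v : Q →ₗ[R] P} {f : P →ₗ[R] M} (hfu : f ∘ₗ u = 0)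
    (hu : Injective (lTensor N u)) (hfv : Injective (lTensor N (f ∘ₗ v))) :
    Injective (lTensor N (u.coprod v)) := by
  rw [injective_iff_map_eq_zero]
  intro w hw
  have hf : f ∘ₗ u.coprod v = (f ∘ₗ v) ∘ₗ snd R A Q := by
    ext <;> simp [← comp_apply f u, hfu]
  have hw₂ : lTensor N (snd R A Q) w = 0 := by
    apply hfv
    rw [← lTensor_comp_apply, ← hf, lTensor_comp_apply, hw, map_zero, map_zero]
  obtain ⟨w', rfl⟩ := (lTensor_exact N Exact.inl_snd snd_surjective w).1 hw₂
  rw [← lTensor_comp_apply, coprod_inl] at hw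
  rw [hu (hw.trans (map_zero _).symm), map_zero]

theorem lTensor_ker_mkQ_comp_subtype_injective {P M Q : Type*}
    [AddCommGroup P] [Module R P] [AddCommGroup M] [Module R M] [AddCommGroup Q] [Module R Q]
    {f : P →ₗ[R] M} {j : Q →ₗ[R] M} {j' : Q →ₗ[R] P} (hj' : f ∘ₗ j' = j)
    (hf : Injective (lTensor N (ker f).subtype)) (hj : Injective (lTensor N j)) :
    Injective (lTensor N (ker ((range j).mkQ ∘ₗ f)).subtype) := by
  have hfj' (q : Q) : f (j' q) = j q := LinearMap.congr_fun hj' q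
  have hmem (x : ker f × Q) : (ker f).subtype.coprod j' x ∈ ker ((range j).mkQ ∘ₗ f) := by
    simp [hfj']
  let c := ((ker f).subtype.coprod j').codRestrict _ hmem
  have hc : Surjective c := by
    rintro ⟨x, hx⟩
    obtain ⟨q, hq⟩ : f x ∈ range j := by simpa using hx
    refine ⟨(⟨x - j' q, ?_⟩, q), Subtype.ext ?_⟩
    · simp [hfj', hq]
    · simp [c]
  refine Injective.of_comp_right (g := lTensor N c) ?_ (lTensor_surjective N hc)
  rw [← coe_comp, ← lTensor_comp, subtype_comp_codRestrict]
  exact lTensor_coprod_injective (comp_ker_subtype f) hf (hj' ▸ hj)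

theorem exact_neg_prod_coprod {A P B H K : Type*}
    [AddCommGroup A] [Module R A] [AddCommGroup P] [Module R P] [AddCommGroup B] [Module R B]
    [AddCommGroup H] [Module R H] [AddCommGroup K] [Module R K]
    {a : A →ₗ[R] P} {ε : P →ₗ[R] K} {i : B →ₗ[R] H} {ev : H →ₗ[R] K}
    {e : P →ₗ[R] H} {e' : A →ₗ[R] B}
    (haε : Exact a ε) (hi : Injective i) (hiev : Exact i ev)
    (he : ev ∘ₗ e = ε) (he' : i ∘ₗ e' = e ∘ₗ a) :
    Exact ((-e').prod a) (i.coprod e) := by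
  rintro ⟨b, c⟩
  constructor
  · intro h
    rw [coprod_apply] at h
    have hc : ε c = 0 := by
      rw [← he, comp_apply, eq_neg_of_add_eq_zero_right h, map_neg, hiev.apply_apply_eq_zero,
        neg_zero]
    obtain ⟨x, rfl⟩ := (haε c).1 hc
    refine ⟨x, Prod.ext (hi ?_) rfl⟩
    show i (-e' x) = i b
    rw [map_neg, ← comp_apply i e', he', comp_apply, eq_neg_of_add_eq_zero_left h]
  · rintro ⟨x, hx⟩
    rw [← hx, ← comp_apply, coprod_comp_prod, comp_neg, he', neg_add_cancel, zero_apply]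

theorem lTensor_injective_of_exact_of_projective {A P B H K : Type*}
    [AddCommGroup A] [Module R A] [AddCommGroup P] [Module R P] [Module.Projective R P]
    [AddCommGroup B] [Module R B] [AddCommGroup H] [Module R H] [AddCommGroup K] [Module R K]
    {a : A →ₗ[R] P} {ε : P →ₗ[R] K} {i : B →ₗ[R] H} {ev : H →ₗ[R] K}
    (haε : Exact a ε) (hε : Surjective ε) (hi : Injective i) (hiev : Exact i ev)
    (hev : Surjective ev) (ha : Injective (lTensor N a)) :
    Injective (lTensor N i) := by
  obtain ⟨e, he⟩ := Module.projective_lifting_property ev ε hev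
  have hea (x : A) : e (a x) ∈ range i :=
    (hiev _).1 (by rw [← comp_apply ev e, he, haε.apply_apply_eq_zero])
  let e' := (LinearEquiv.ofInjective i hi).symm.toLinearMap ∘ₗ (e ∘ₗ a).codRestrict _ hea
  have he' : i ∘ₗ e' = e ∘ₗ a := by
    ext x
    exact congrArg Subtype.val ((LinearEquiv.ofInjective i hi).apply_symm_apply _)
  have hsurj : Surjective (i.coprod e) := by
    intro φ
    obtain ⟨c, hc⟩ := hε (ev φ)
    obtain ⟨b, hb⟩ := (hiev (φ - e c)).1 (by rw [map_sub, ← comp_apply ev e, he, hc, sub_self])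
    exact ⟨(b, c), by simp [hb]⟩
  have hex := lTensor_exact N (exact_neg_prod_coprod haε hi hiev he he') hsurj
  rw [injective_iff_map_eq_zero]
  intro x hx
  obtain ⟨w, hw⟩ := (hex (lTensor N (inl R B P) x)).1 (by rwa [← lTensor_comp_apply, coprod_inl])
  have hw₀ : w = 0 := ha <| by
    rw [map_zero, ← snd_prod (-e') a, lTensor_comp_apply, hw, ← lTensor_comp_apply,
      snd_comp_inl, lTensor_zero, zero_apply]
  rw [← lTensor_id_apply N B x, ← fst_comp_inl R B P, lTensor_comp_apply, ← hw, hw₀, map_zero,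
    map_zero]

end LinearMap

theorem CategoryTheory.ProjectiveResolution.lTensor_ker_subtype_injective {R : Type u}
    [CommRing R] {M N : ModuleCat.{u} R} (P : ProjectiveResolution M)
    (htor : Limits.IsZero (((Tor (ModuleCat.{u} R) 1).obj N).obj M)) :
    Function.Injective (LinearMap.lTensor N (LinearMap.ker (P.π.f 0).hom).subtype) := by
  let F := (MonoidalCategory.tensoringLeft (ModuleCat.{u} R)).obj N
  have hF : ((F.mapHomologicalComplex _).obj P.complex).ExactAt 1 :=
    (HomologicalComplex.exactAt_iff_isZero_homology _ _).2
      (htor.of_iso (P.isoLeftDerivedObj F 1).symm)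
  have hP := P.complex_exactAt_succ 0
  rw [HomologicalComplex.exactAt_iff' _ 2 1 0 (by simp) (by simp)] at hF hP
  exact LinearMap.lTensor_ker_subtype_injective_of_exact
    ((ShortComplex.ShortExact.moduleCat_exact_iff_function_exact _).1 hP)
    ((ShortComplex.ShortExact.moduleCat_exact_iff_function_exact _).1 P.exact₀)
    ((ShortComplex.ShortExact.moduleCat_exact_iff_function_exact _).1 hF)

open LinearMap

theorem Algebra.isEpi_of_forall_ringHom_ext {R S : Type u} [CommRing R] [CommRing S]
    [Algebra R S] (h : ∀ (T : Type u) [CommRing T] (g₁ g₂ : S →+* T),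
      g₁.comp (algebraMap R S) = g₂.comp (algebraMap R S) → g₁ = g₂) :
    Algebra.IsEpi R S :=
  CommRingCat.epi_iff_epi.1
    ⟨fun g₁ g₂ hg ↦ CommRingCat.hom_ext (h _ g₁.hom g₂.hom (congrArg CommRingCat.Hom.hom hg))⟩

section DomainModule

variable {R S : Type*} [CommRing R] [CommRing S] [Algebra R S]

/-- Not an instance: it would clash with the action through the codomain when `M` is itself an
`S`-module. -/
abbrev LinearMap.domainModule (M : Type*) [AddCommGroup M] [Module R M] :
    Module S (S →ₗ[R] M) :=
  Module.compHom (R := Sᵈᵐᵃ) (S →ₗ[R] M) (RingEquiv.toOpposite S).toRingHom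

attribute [local instance] LinearMap.domainModule

theorem LinearMap.domainModule_smul_apply {M : Type*} [AddCommGroup M] [Module R M] (s t : S)
    (φ : S →ₗ[R] M) : (s • φ) t = φ (s * t) :=
  rfl

theorem LinearMap.domainModule_isScalarTower (M : Type*) [AddCommGroup M] [Module R M] :
    IsScalarTower R S (S →ₗ[R] M) :=
  ⟨fun r s φ ↦ LinearMap.ext fun t ↦ by
    rw [domainModule_smul_apply, smul_apply, domainModule_smul_apply, smul_mul_assoc, map_smul]⟩

end DomainModule

theorem Algebra.lTensor_linearMap_injective_s4 (R S : Type*) [CommRing R] [CommRing S]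
    [Algebra R S] : Injective (lTensor S (Algebra.linearMap R S)) := by
  have h : mul' R S ∘ₗ lTensor S (Algebra.linearMap R S) =
      (_root_.TensorProduct.rid R S).toLinearMap := by
    ext s
    simp
  refine Injective.of_comp (f := mul' R S) ?_
  rw [← coe_comp, h]
  exact (_root_.TensorProduct.rid R S).injective

theorem TensorProduct.mk_one_injective_of_injective {R S M H : Type*} [CommRing R] [CommRing S]
    [Algebra R S] [AddCommGroup M] [Module R M] [AddCommGroup H] [Module R H] [Module S H]
    [IsScalarTower R S H] {i : M →ₗ[R] H} (hi : Injective i) :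
    Injective (mk R S M 1) := by
  refine Injective.of_comp (f := lift (restrictScalars₁₂ R R (lsmul S H)) ∘ lTensor S i) ?_
  convert hi using 1
  ext m
  simp

section QuotientRange

variable (R S : Type*) [CommRing R] [CommRing S] [Algebra R S]

local notation "K" => S ⧸ LinearMap.range (Algebra.linearMap R S)
local notation "π" => Submodule.mkQ (LinearMap.range (Algebra.linearMap R S))

theorem mkQ_range_linearMap_one : π (1 : S) = 0 :=
  (Submodule.Quotient.mk_eq_zero _).2 ⟨1, map_one (algebraMap R S)⟩

theorem lcomp_mkQ_injective : Injective (lcomp R K π) :=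
  fun _ _ h ↦ Submodule.linearMap_qext _ h

theorem applyₗ_one_surjective : Surjective (applyₗ (R := R) (M₂ := K) (1 : S)) := by
  intro y
  obtain ⟨s, rfl⟩ := Submodule.mkQ_surjective _ y
  exact ⟨π ∘ₗ mul R S s, by simp⟩

theorem exact_lcomp_mkQ_applyₗ_one :
    Exact (lcomp R K π) (applyₗ (R := R) (M₂ := K) (1 : S)) := by
  intro φ
  constructor
  · intro hφ
    have h : range (Algebra.linearMap R S) ≤ ker φ := by
      rintro _ ⟨r, rfl⟩
      simp [Algebra.algebraMap_eq_smul_one, show φ 1 = 0 from hφ]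
    exact ⟨_, (lcomp_apply' _ _).trans (Submodule.liftQ_mkQ _ φ h)⟩
  · rintro ⟨g, rfl⟩
    exact (congrArg g (mkQ_range_linearMap_one R S)).trans (map_zero g)

theorem map_mkQ_id_surjective :
    Surjective (map π (LinearMap.id (R := R) (M := Module.End R K))) :=
  map_surjective (Submodule.mkQ_surjective _) (fun x ↦ ⟨x, rfl⟩)

attribute [local instance] LinearMap.domainModule LinearMap.domainModule_isScalarTower

theorem mk_one_end_injective : Injective (TensorProduct.mk R S (Module.End R K) 1) :=
  TensorProduct.mk_one_injective_of_injective (lcomp_mkQ_injective R S)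

variable [Algebra.IsEpi R S]

theorem exists_one_tmul_eq_of_lift_applyₗ_eq_zero
    (hinc : Injective (lTensor S (lcomp R K π))) {z : S ⊗[R] Module.End R K}
    (hz : lift (applyₗ (R := R)) (map π id z) = 0) : ∃ g, (1 : S) ⊗ₜ g = z := by
  let μ := lift (restrictScalars₁₂ R R (lsmul S (S →ₗ[R] K)))
  have hμ : Injective (μ ∘ lTensor S (lcomp R K π)) :=
    (Algebra.injective_lift_lsmul R S _).comp hinc
  have hμ₁ (z : S ⊗[R] Module.End R K) :
      μ (lTensor S (lcomp R K π) z) 1 = lift (applyₗ (R := R)) (map π id z) := by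
    induction z using TensorProduct.induction_on with
    | zero => simp
    | tmul s g => simp [μ, domainModule_smul_apply]
    | add x y hx hy => simp [hx, hy]
  obtain ⟨g, hg⟩ := (exact_lcomp_mkQ_applyₗ_one R S _).1 ((hμ₁ z).trans hz)
  exact ⟨g, hμ (by simp [μ, hg])⟩

theorem exact_mk_one_map_mkQ (hinc : Injective (lTensor S (lcomp R K π))) :
    Exact (TensorProduct.mk R S (Module.End R K) 1) (map π (LinearMap.id (R := R))) := by
  intro z
  constructor
  · intro hz
    exact exists_one_tmul_eq_of_lift_applyₗ_eq_zero R S hinc (by rw [hz, map_zero])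
  · rintro ⟨g, rfl⟩
    rw [TensorProduct.mk_apply, map_tmul, mkQ_range_linearMap_one, zero_tmul]

theorem lift_applyₗ_injective (hinc : Injective (lTensor S (lcomp R K π))) :
    Injective (lift (applyₗ (R := R) (M := K) (M₂ := K))) := by
  rw [injective_iff_map_eq_zero]
  intro w hw
  obtain ⟨z, rfl⟩ := map_mkQ_id_surjective R S w
  obtain ⟨g, rfl⟩ := exists_one_tmul_eq_of_lift_applyₗ_eq_zero R S hinc hw
  exact (exact_mk_one_map_mkQ R S hinc).apply_apply_eq_zero g

end QuotientRange

section Tor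

variable {R S : Type u} [CommRing R] [CommRing S] [Algebra R S]

local notation "K" => S ⧸ LinearMap.range (Algebra.linearMap R S)
local notation "π" => Submodule.mkQ (LinearMap.range (Algebra.linearMap R S))

theorem lTensor_lcomp_mkQ_injective
    (htor : Limits.IsZero
      (((Tor (ModuleCat.{u} R) 1).obj (ModuleCat.of R S)).obj (ModuleCat.of R S))) :
    Injective (lTensor S (lcomp R K π)) := by
  obtain ⟨P⟩ := HasProjectiveResolution.out (Z := ModuleCat.of R S)
  have : Module.Projective R (P.complex.X 0) := (IsProjective.iff_projective _).2 (P.projective 0)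
  let p : P.complex.X 0 →ₗ[R] S := (P.π.f 0).hom
  have hp : Surjective p := (ModuleCat.epi_iff_surjective _).1 inferInstance
  obtain ⟨z₀, hz₀⟩ := hp 1
  have hz₀' : p ∘ₗ toSpanSingleton R _ z₀ = Algebra.linearMap R S := by
    ext
    simp [hz₀]
  exact lTensor_injective_of_exact_of_projective (exact_subtype_ker_map (π ∘ₗ p))
    ((Submodule.mkQ_surjective _).comp hp) (lcomp_mkQ_injective R S)
    (exact_lcomp_mkQ_applyₗ_one R S) (applyₗ_one_surjective R S)
    (lTensor_ker_mkQ_comp_subtype_injective hz₀' (P.lTensor_ker_subtype_injective htor)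
      (Algebra.lTensor_linearMap_injective_s4 R S))

end Tor

theorem stmt_4_general {R S : Type u} [CommRing R] [CommRing S] [Algebra R S]
    (hepi : ∀ (T : Type u) [Ring T] (g₁ g₂ : S →+* T),
      g₁.comp (algebraMap R S) = g₂.comp (algebraMap R S) → g₁ = g₂)
    (htor : Limits.IsZero
      (((Tor (ModuleCat.{u} R) 1).obj (ModuleCat.of R S)).obj (ModuleCat.of R S))) :
    Function.Injective
      (TensorProduct.mk R S (Module.End R (S ⧸ LinearMap.range (Algebra.linearMap R S))) 1) ∧
    Function.Exact
      (TensorProduct.mk R S (Module.End R (S ⧸ LinearMap.range (Algebra.linearMap R S))) 1)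
      (TensorProduct.map (LinearMap.range (Algebra.linearMap R S)).mkQ
        (LinearMap.id (R := R)
          (M := Module.End R (S ⧸ LinearMap.range (Algebra.linearMap R S))))) ∧
    Function.Surjective
      (TensorProduct.map (LinearMap.range (Algebra.linearMap R S)).mkQ
        (LinearMap.id (R := R)
          (M := Module.End R (S ⧸ LinearMap.range (Algebra.linearMap R S))))) ∧
    ∃ ψ : ((S ⧸ LinearMap.range (Algebra.linearMap R S)) ⊗[R]
          Module.End R (S ⧸ LinearMap.range (Algebra.linearMap R S))) →ₗ[R]
        (S ⧸ LinearMap.range (Algebra.linearMap R S)),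
      (∀ (y : S ⧸ LinearMap.range (Algebra.linearMap R S))
          (g : Module.End R (S ⧸ LinearMap.range (Algebra.linearMap R S))),
          ψ (y ⊗ₜ[R] g) = g y) ∧
      Function.Bijective ψ := by
  have := Algebra.isEpi_of_forall_ringHom_ext fun T _ ↦ hepi T
  have hinc := lTensor_lcomp_mkQ_injective htor
  refine ⟨mk_one_end_injective R S, exact_mk_one_map_mkQ R S hinc,
    map_mkQ_id_surjective R S, lift applyₗ, fun _ _ ↦ rfl,
    lift_applyₗ_injective R S hinc, fun y ↦ ⟨y ⊗ₜ LinearMap.id, rfl⟩⟩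

/-- Let `λ = algebraMap R S` be an injective ring epimorphism between commutative rings with
`Tor₁^R(S, S) = 0`.  Write `S/R` for the quotient `R`-module `S ⧸ λ(R)` with projection `π`,
and `S' = End_R(S/R)`.  Then:
(a) the map `λ' : S' → S ⊗_R S'`, `f ↦ 1 ⊗ f`, is injective;
(b) the sequence `0 → S' → S ⊗_R S' → (S/R) ⊗_R S' → 0`, with maps `λ'` and `π ⊗ id`,
    is exact;
(c) the evaluation map `ψ : (S/R) ⊗_R S' → S/R`, `y ⊗ g ↦ g y`, is bijective. -/
theorem stmt_4 {R S : Type u} [CommRing R] [CommRing S] [Algebra R S]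
    (hinj : Function.Injective (algebraMap R S))
    (hepi : ∀ (T : Type u) [Ring T] (g₁ g₂ : S →+* T),
      g₁.comp (algebraMap R S) = g₂.comp (algebraMap R S) → g₁ = g₂)
    (htor : Limits.IsZero
      (((Tor (ModuleCat.{u} R) 1).obj (ModuleCat.of R S)).obj (ModuleCat.of R S))) :
    Function.Injective
      (TensorProduct.mk R S (Module.End R (S ⧸ LinearMap.range (Algebra.linearMap R S))) 1) ∧
    Function.Exact
      (TensorProduct.mk R S (Module.End R (S ⧸ LinearMap.range (Algebra.linearMap R S))) 1)
      (TensorProduct.map (LinearMap.range (Algebra.linearMap R S)).mkQ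
        (LinearMap.id (R := R)
          (M := Module.End R (S ⧸ LinearMap.range (Algebra.linearMap R S))))) ∧
    Function.Surjective
      (TensorProduct.map (LinearMap.range (Algebra.linearMap R S)).mkQ
        (LinearMap.id (R := R)
          (M := Module.End R (S ⧸ LinearMap.range (Algebra.linearMap R S))))) ∧
    ∃ ψ : ((S ⧸ LinearMap.range (Algebra.linearMap R S)) ⊗[R]
          Module.End R (S ⧸ LinearMap.range (Algebra.linearMap R S))) →ₗ[R]
        (S ⧸ LinearMap.range (Algebra.linearMap R S)),
      (∀ (y : S ⧸ LinearMap.range (Algebra.linearMap R S))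
          (g : Module.End R (S ⧸ LinearMap.range (Algebra.linearMap R S))),
          ψ (y ⊗ₜ[R] g) = g y) ∧
      Function.Bijective ψ :=
  stmt_4_general hepi htor
end

section
/- Assume moreover that Tor₁^R(S, S) = 0. Then the endomorphism ring S' = End_R(S/R) is commutative, i.e. f ∘ g = g ∘ f for all R-linear endomorphisms f, g of S/R. -/
/-!
Write `M = S/R` and choose a free presentation `0 → L → F → M → 0`. Then `Tor₁(M, M)` is the
kernel `K` of `L ⊗ M → F ⊗ M`, and the connecting map `δ : K → M` of `0 → R → S → M → 0` is
`x ⊗ m ↦ α x • m`, where `α : L → R` is induced by a lift `F → S` of `F → M`. Naturality of `δ`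
in each tensor factor says that it commutes with every `h ∈ End_R(M)`, acting on the second factor
directly and on the first through a lift of `h` to `F`. Since `R → S` is an epimorphism,
`s ⊗ 1 = 1 ⊗ s` in `S ⊗_R S`, so `m ⊗ 1 = 0` in `M ⊗ S` and `δ` is surjective. For `m = δ z`,
`f (g m) = δ (f·(g·z)) = δ (g·(f·z)) = g (f m)`, the two actions on `K` commuting.
-/

open CategoryTheory TensorProduct LinearMap Function

universe u

theorem Algebra.IsEpi.of_ringHom_ext {R : Type*} {S : Type u} [CommRing R] [Ring S] [Algebra R S]
    (h : ∀ (T : Type u) [Ring T] (g₁ g₂ : S →+* T),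
      g₁.comp (algebraMap R S) = g₂.comp (algebraMap R S) → g₁ = g₂) :
    Algebra.IsEpi R S := by
  refine (Algebra.isEpi_iff_forall_one_tmul_eq R S).mpr fun s ↦ ?_
  let inl : S →ₐ[R] S ⊗[R] S := Algebra.TensorProduct.includeLeft
  let inr : S →ₐ[R] S ⊗[R] S := Algebra.TensorProduct.includeRight
  have := h (S ⊗[R] S) inr.toRingHom inl.toRingHom <|
    RingHom.ext fun r ↦ (inr.commutes r).trans (inl.commutes r).symm
  exact RingHom.congr_fun this s

theorem Algebra.IsEpi.tmul_one_eq_zero {R S M : Type*} [CommRing R] [Ring S] [Algebra R S]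
    [Algebra.IsEpi R S] [AddCommGroup M] [Module R M] {π : S →ₗ[R] M} (hπ : Surjective π)
    (hπ₁ : π 1 = 0) (m : M) : m ⊗ₜ[R] (1 : S) = 0 := by
  obtain ⟨s, rfl⟩ := hπ m
  rw [← rTensor_tmul, ← (Algebra.isEpi_iff_forall_one_tmul_eq R S).mp ‹_› s, rTensor_tmul,
    hπ₁, zero_tmul]

theorem LinearMap.rTensor_lTensor_comm_apply {R M N P Q : Type*} [CommSemiring R]
    [AddCommMonoid M] [Module R M] [AddCommMonoid N] [Module R N] [AddCommMonoid P] [Module R P]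
    [AddCommMonoid Q] [Module R Q] (f : M →ₗ[R] N) (g : P →ₗ[R] Q) (x : M ⊗[R] P) :
    rTensor Q f (lTensor M g x) = lTensor N g (rTensor P f x) := by
  rw [← LinearMap.comp_apply, rTensor_comp_lTensor, ← lTensor_comp_rTensor, LinearMap.comp_apply]

section Contraction

variable {R N M : Type*} [CommSemiring R] [AddCommMonoid N] [Module R N] [AddCommMonoid M]
  [Module R M]

def scalarContraction (α : N →ₗ[R] R) : N ⊗[R] M →ₗ[R] M :=
  TensorProduct.lid R M ∘ₗ rTensor M α

@[simp]
theorem scalarContraction_tmul (α : N →ₗ[R] R) (n : N) (m : M) :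
    scalarContraction α (n ⊗ₜ m) = α n • m :=
  rfl

theorem scalarContraction_lTensor (α : N →ₗ[R] R) (h : M →ₗ[R] M) (z : N ⊗[R] M) :
    scalarContraction α (lTensor N h z) = h (scalarContraction α z) := by
  induction z using TensorProduct.induction_on with
  | zero => simp
  | tmul n m => simp
  | add x y hx hy => simp only [map_add, hx, hy]

end Contraction

section Extension

variable {R S M F : Type*} [CommRing R] [Ring S] [Algebra R S]
  [AddCommGroup M] [Module R M] [AddCommGroup F] [Module R F]
  {π : S →ₗ[R] M} {p : F →ₗ[R] M}

theorem exists_algebraMap_comp_eq_comp_subtype (hinj : Injective (algebraMap R S))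
    (hexact : Exact (Algebra.linearMap R S) π) {α₀ : F →ₗ[R] S} (hα₀ : π ∘ₗ α₀ = p) :
    ∃ α : ker p →ₗ[R] R, Algebra.linearMap R S ∘ₗ α = α₀ ∘ₗ (ker p).subtype := by
  have hmem (x : ker p) : α₀ x ∈ range (Algebra.linearMap R S) :=
    (hexact _).mp <| by simpa [← hα₀] using x.2
  let e := LinearEquiv.ofInjective (Algebra.linearMap R S) hinj
  refine ⟨e.symm.toLinearMap ∘ₗ codRestrict _ (α₀ ∘ₗ (ker p).subtype) hmem, ?_⟩
  ext x
  exact congr(Subtype.val $(e.apply_symm_apply ⟨_, hmem x⟩))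

variable {α₀ : F →ₗ[R] S} {α : ker p →ₗ[R] R}

/- Balancing of `Tor₁(M, M)`: the map `y ⊗ s ↦ π (α₀ y * s)` on `F ⊗ S` compares the
connecting map built from the presentation of the first factor with the one built from
`0 → R → S → M → 0` in the second. -/
theorem scalarContraction_lTensor_eq_of_rTensor_eq_tmul_one (hα₀ : π ∘ₗ α₀ = p)
    (hα : Algebra.linearMap R S ∘ₗ α = α₀ ∘ₗ (ker p).subtype) {z : ker p ⊗[R] S} {w : F}
    (hz : rTensor S (ker p).subtype z = w ⊗ₜ 1) :
    scalarContraction α (lTensor _ π z) = p w := by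
  have key : scalarContraction α ∘ₗ lTensor _ π =
      π ∘ₗ LinearMap.mul' R S ∘ₗ rTensor S α₀ ∘ₗ rTensor S (ker p).subtype := by
    ext x s
    have hx : algebraMap R S (α x) = α₀ x := congr($hα x)
    simp [← map_smul, Algebra.smul_def, hx]
  simpa [hz, ← hα₀] using congr($key z)

theorem exists_lTensor_eq_and_rTensor_eq_tmul_one (hπ : Surjective π)
    (hexact : Exact (Algebra.linearMap R S) π) {z : ker p ⊗[R] M}
    (hz : z ∈ ker (rTensor M (ker p).subtype)) :
    ∃ (z' : ker p ⊗[R] S) (w : F), lTensor _ π z' = z ∧ rTensor S (ker p).subtype z' = w ⊗ₜ 1 := by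
  obtain ⟨z', rfl⟩ := lTensor_surjective _ hπ z
  have hz' : lTensor F π (rTensor S (ker p).subtype z') = 0 := by
    rwa [← rTensor_lTensor_comm_apply]
  obtain ⟨v, hv⟩ := (lTensor_exact F hexact hπ _).mp hz'
  obtain ⟨w, rfl⟩ := (TensorProduct.rid R F).symm.surjective v
  refine ⟨z', w, rfl, ?_⟩
  rw [← hv, TensorProduct.rid_symm_apply, lTensor_tmul, Algebra.linearMap_apply, map_one]

theorem scalarContraction_rTensor_of_mem_ker (hπ : Surjective π)
    (hexact : Exact (Algebra.linearMap R S) π) (hα₀ : π ∘ₗ α₀ = p)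
    (hα : Algebra.linearMap R S ∘ₗ α = α₀ ∘ₗ (ker p).subtype) {h : M →ₗ[R] M} {h₀ : F →ₗ[R] F}
    {h₁ : ker p →ₗ[R] ker p} (hh₀ : p ∘ₗ h₀ = h ∘ₗ p)
    (hh₁ : (ker p).subtype ∘ₗ h₁ = h₀ ∘ₗ (ker p).subtype) {z : ker p ⊗[R] M}
    (hz : z ∈ ker (rTensor M (ker p).subtype)) :
    scalarContraction α (rTensor M h₁ z) = h (scalarContraction α z) := by
  obtain ⟨z', w, rfl, hw⟩ := exists_lTensor_eq_and_rTensor_eq_tmul_one hπ hexact hz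
  have hw' : rTensor S (ker p).subtype (rTensor S h₁ z') = h₀ w ⊗ₜ 1 := by
    rw [← LinearMap.comp_apply, ← rTensor_comp, hh₁, rTensor_comp, LinearMap.comp_apply, hw,
      rTensor_tmul]
  rw [rTensor_lTensor_comm_apply,
    scalarContraction_lTensor_eq_of_rTensor_eq_tmul_one hα₀ hα hw',
    scalarContraction_lTensor_eq_of_rTensor_eq_tmul_one hα₀ hα hw, ← LinearMap.comp_apply, hh₀,
    LinearMap.comp_apply]

theorem exists_mem_ker_scalarContraction_eq (hexact : Exact (Algebra.linearMap R S) π)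
    (hp : Surjective p) (hα₀ : π ∘ₗ α₀ = p)
    (hα : Algebra.linearMap R S ∘ₗ α = α₀ ∘ₗ (ker p).subtype)
    (h₁ : ∀ m : M, m ⊗ₜ[R] (1 : S) = 0) (m : M) :
    ∃ z ∈ ker (rTensor M (ker p).subtype), scalarContraction α z = m := by
  obtain ⟨w, rfl⟩ := hp m
  obtain ⟨z', hz'⟩ := (rTensor_exact S (exact_subtype_ker_map p) hp (w ⊗ₜ 1)).mp (h₁ _)
  refine ⟨lTensor _ π z', ?_, scalarContraction_lTensor_eq_of_rTensor_eq_tmul_one hα₀ hα hz'⟩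
  have hπ₁ : π 1 = 0 := by simpa using hexact.apply_apply_eq_zero 1
  rw [mem_ker, rTensor_lTensor_comm_apply, hz', lTensor_tmul, hπ₁, tmul_zero]

end Extension

theorem LinearMap.comp_comm_of_tmul_one_eq_zero {R S M : Type*} [CommRing R] [Ring S]
    [Algebra R S] [AddCommGroup M] [Module R M] {π : S →ₗ[R] M}
    (hinj : Injective (algebraMap R S)) (hπ : Surjective π)
    (hexact : Exact (Algebra.linearMap R S) π) (h₁ : ∀ m : M, m ⊗ₜ[R] (1 : S) = 0)
    (f g : M →ₗ[R] M) : f ∘ₗ g = g ∘ₗ f := by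
  obtain ⟨p, hp⟩ : ∃ p : (M →₀ R) →ₗ[R] M, Surjective p :=
    ⟨_, Finsupp.linearCombination_id_surjective R M⟩
  obtain ⟨α₀, hα₀⟩ := Module.projective_lifting_property π p hπ
  obtain ⟨α, hα⟩ := exists_algebraMap_comp_eq_comp_subtype hinj hexact hα₀
  obtain ⟨g₀, hg₀⟩ := Module.projective_lifting_property p (g ∘ₗ p) hp
  have hg₀_ker : ∀ x ∈ ker p, g₀ x ∈ ker p := fun x hx ↦ by
    rw [mem_ker, ← LinearMap.comp_apply, hg₀, LinearMap.comp_apply, mem_ker.mp hx, map_zero]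
  let g₁ := g₀.restrict hg₀_ker
  have hg : ∀ z ∈ ker (rTensor M (ker p).subtype),
      scalarContraction α (rTensor M g₁ z) = g (scalarContraction α z) :=
    fun z hz ↦ scalarContraction_rTensor_of_mem_ker hπ hexact hα₀ hα hg₀
      (subtype_comp_restrict hg₀_ker) hz
  ext m
  obtain ⟨z, hz, rfl⟩ := exists_mem_ker_scalarContraction_eq hexact hp hα₀ hα h₁ m
  have hfz : lTensor _ f z ∈ ker (rTensor M (ker p).subtype) := by
    rw [mem_ker, rTensor_lTensor_comm_apply, mem_ker.mp hz, map_zero]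
  calc f (g (scalarContraction α z))
      = scalarContraction α (lTensor _ f (rTensor M g₁ z)) := by
        rw [scalarContraction_lTensor, hg z hz]
    _ = scalarContraction α (rTensor M g₁ (lTensor _ f z)) := by
        rw [rTensor_lTensor_comm_apply]
    _ = g (f (scalarContraction α z)) := by rw [hg _ hfz, scalarContraction_lTensor]

theorem stmt_6_general {R S : Type u} [CommRing R] [CommRing S] [Algebra R S]
    (hinj : Function.Injective (algebraMap R S))
    (hepi : ∀ (T : Type u) [Ring T] (g₁ g₂ : S →+* T),
      g₁.comp (algebraMap R S) = g₂.comp (algebraMap R S) → g₁ = g₂) :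
    ∀ f g : (S ⧸ LinearMap.range (Algebra.linearMap R S)) →ₗ[R]
        (S ⧸ LinearMap.range (Algebra.linearMap R S)),
      f.comp g = g.comp f := by
  have := Algebra.IsEpi.of_ringHom_ext hepi
  have hexact := exact_map_mkQ_range (Algebra.linearMap R S)
  have hπ₁ : (range (Algebra.linearMap R S)).mkQ 1 = 0 := by
    simpa using hexact.apply_apply_eq_zero 1
  exact comp_comm_of_tmul_one_eq_zero hinj (Submodule.mkQ_surjective _) hexact
    (Algebra.IsEpi.tmul_one_eq_zero (Submodule.mkQ_surjective _) hπ₁)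

/-- Let `λ = algebraMap R S` be an injective ring epimorphism between commutative rings
with `Tor₁^R(S, S) = 0`.  Then the endomorphism ring `S' = End_R(S/R)` of the quotient
`R`-module `S/R = S ⧸ λ(R)` is commutative: `f ∘ g = g ∘ f` for all `R`-linear
endomorphisms `f, g` of `S/R`. -/
theorem stmt_6 {R S : Type u} [CommRing R] [CommRing S] [Algebra R S]
    (hinj : Function.Injective (algebraMap R S))
    (hepi : ∀ (T : Type u) [Ring T] (g₁ g₂ : S →+* T),
      g₁.comp (algebraMap R S) = g₂.comp (algebraMap R S) → g₁ = g₂)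
    (htor : Limits.IsZero
      (((Tor (ModuleCat.{u} R) 1).obj (ModuleCat.of R S)).obj (ModuleCat.of R S))) :
    ∀ f g : (S ⧸ LinearMap.range (Algebra.linearMap R S)) →ₗ[R]
        (S ⧸ LinearMap.range (Algebra.linearMap R S)),
      f.comp g = g.comp f :=
  stmt_6_general hinj hepi
end

section
/- Let R₀ be a commutative ring and let R₁ and R₂ be (associative, unital, possibly noncommutative) R₀-algebras, with structure maps having central image. Suppose the structure map algebraMap : R₀ → R₁ is a ring epimorphism. Then for every ring T and every pair of ring homomorphisms f₁ : R₁ → T and f₂ : R₂ → T satisfying f₁ ∘ algebraMap_{R₁} = f₂ ∘ algebraMap_{R₂} : R₀ → T, the following hold: (a) f₁(x)·f₂(y) = f₂(y)·f₁(x) for all x ∈ R₁ and y ∈ R₂; (b) there exists a unique ring homomorphism F : R₁ ⊗_{R₀} R₂ → T such that F(x ⊗ 1) = f₁(x) and F(1 ⊗ y) = f₂(y) for all x ∈ R₁, y ∈ R₂. In particular, R₁ ⊗_{R₀} R₂ with the maps x ↦ x ⊗ 1 and y ↦ 1 ⊗ y is the coproduct of R₁ and R₂ in the category of R₀-rings.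 -/
/-!
Conjugation by the unit `1 + εt` of the square-zero extension `T ⊕ εT` fixes `x ∈ T` exactly when
`t` commutes with `x`. For `t = f₂ y`, conjugating `f₁` therefore leaves it unchanged on the
(central) image of `R₀`, so by the epimorphism property it leaves it unchanged everywhere: `f₂ y`
commutes with every `f₁ x`. Both maps then land in the centralizer of the image of `R₀`, which is an
`R₀`-algebra, and the universal property of the tensor product of algebras applies there.
-/

open TensorProduct TrivSqZeroExt

universe u

def RingHom.IsEpi {A B : Type u} [Ring A] [Ring B] (f : A →+* B) : Prop :=
  ∀ (T : Type u) [Ring T] (g₁ g₂ : B →+* T), g₁.comp f = g₂.comp f → g₁ = g₂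

namespace TrivSqZeroExt

variable {T : Type*} [Ring T]

def oneAddInrUnit (t : T) : (TrivSqZeroExt T T)ˣ where
  val := 1 + inr t
  inv := 1 - inr t
  val_inv := by rw [mul_sub, mul_one, add_mul, one_mul, inr_mul_inr]; abel
  inv_val := by rw [sub_mul, one_mul, mul_add, mul_one, inr_mul_inr]; abel

theorem conj_oneAddInrUnit_inl_eq_iff (t x : T) :
    ConjAct.toConjAct (oneAddInrUnit t) • inl x = (inl x : TrivSqZeroExt T T) ↔ Commute t x := by
  rw [ConjAct.units_smul_def, ConjAct.ofConjAct_toConjAct, Units.mul_inv_eq_iff_eq_mul]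
  simp only [oneAddInrUnit, mul_add, add_mul, mul_one, one_mul, add_right_inj]
  rw [inr_mul_inl, inl_mul_inr, inr_injective.eq_iff, op_smul_eq_mul, smul_eq_mul, commute_iff_eq]

end TrivSqZeroExt

theorem RingHom.IsEpi.commute_map {A B T : Type u} [Ring A] [Ring B] [Ring T] {f : A →+* B}
    (hf : f.IsEpi) (g : B →+* T) {t : T} (ht : ∀ a, Commute t (g (f a))) (b : B) :
    Commute t (g b) := by
  let ι := (inlHom T T).comp g
  let conj := MulSemiringAction.toRingHom _ (TrivSqZeroExt T T)
    (ConjAct.toConjAct (oneAddInrUnit t))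
  have hconj : conj.comp ι = ι := hf _ _ _ <| RingHom.ext fun a =>
    (conj_oneAddInrUnit_inl_eq_iff t _).mpr (ht a)
  exact (conj_oneAddInrUnit_inl_eq_iff t _).mp (RingHom.congr_fun hconj b)

section

variable {R A B T : Type*} [CommSemiring R] [Semiring A] [Semiring B] [Semiring T]
  [Algebra R A] [Algebra R B]

abbrev RingHom.centralizerRangeAlgebra (φ : R →+* T) :
    Algebra R (Subsemiring.centralizer (Set.range φ)) :=
  RingHom.toAlgebra'
    (φ.codRestrict _ fun r => Subsemiring.mem_centralizer_iff.mpr <| by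
      rintro _ ⟨s, rfl⟩
      rw [← map_mul, mul_comm, map_mul])
    fun r c => Subtype.ext (Subsemiring.mem_centralizer_iff.mp c.2 _ ⟨r, rfl⟩)

theorem RingHom.map_mem_centralizer_range_comp_algebraMap (f : A →+* T) (x : A) :
    f x ∈ Subsemiring.centralizer (Set.range (f.comp (algebraMap R A))) := by
  rw [Subsemiring.mem_centralizer_iff]
  rintro _ ⟨r, rfl⟩
  rw [RingHom.comp_apply, ← map_mul, Algebra.commutes, map_mul]

namespace Algebra.TensorProduct

noncomputable def liftRingHom (f₁ : A →+* T) (f₂ : B →+* T)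
    (hcomp : f₁.comp (algebraMap R A) = f₂.comp (algebraMap R B))
    (hcomm : ∀ x y, Commute (f₁ x) (f₂ y)) : A ⊗[R] B →+* T :=
  letI := (f₁.comp (algebraMap R A)).centralizerRangeAlgebra
  let f₁' : A →ₐ[R] Subsemiring.centralizer (Set.range (f₁.comp (algebraMap R A))) :=
    { toRingHom := f₁.codRestrict _ f₁.map_mem_centralizer_range_comp_algebraMap
      commutes' := fun _ => rfl }
  let f₂' : B →ₐ[R] Subsemiring.centralizer (Set.range (f₁.comp (algebraMap R A))) :=
    { toRingHom := f₂.codRestrict _ (hcomp ▸ f₂.map_mem_centralizer_range_comp_algebraMap)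
      commutes' := fun r => Subtype.ext (RingHom.congr_fun hcomp r).symm }
  (Subsemiring.subtype _).comp (lift f₁' f₂' fun x y => Subtype.ext (hcomm x y)).toRingHom

@[simp]
theorem liftRingHom_tmul (f₁ : A →+* T) (f₂ : B →+* T)
    (hcomp : f₁.comp (algebraMap R A) = f₂.comp (algebraMap R B))
    (hcomm : ∀ x y, Commute (f₁ x) (f₂ y)) (x : A) (y : B) :
    liftRingHom f₁ f₂ hcomp hcomm (x ⊗ₜ y) = f₁ x * f₂ y :=
  rfl

end Algebra.TensorProduct

end

/-- Let `R₀` be a commutative ring and `R₁`, `R₂` (possibly noncommutative) `R₀`-algebras.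
Suppose `algebraMap R₀ R₁` is a ring epimorphism.  Then for every ring `T` and all ring
homomorphisms `f₁ : R₁ → T`, `f₂ : R₂ → T` with `f₁ ∘ algebraMap = f₂ ∘ algebraMap`:
(a) `f₁ x` and `f₂ y` commute for all `x, y`;
(b) there is a unique ring homomorphism `F : R₁ ⊗[R₀] R₂ → T` with `F (x ⊗ 1) = f₁ x`
    and `F (1 ⊗ y) = f₂ y`.
In particular `R₁ ⊗[R₀] R₂` is the coproduct of `R₁` and `R₂` over `R₀`. -/
theorem stmt_7 {R₀ R₁ R₂ : Type u} [CommRing R₀] [Ring R₁] [Ring R₂]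
    [Algebra R₀ R₁] [Algebra R₀ R₂]
    (hepi : ∀ (T : Type u) [Ring T] (g₁ g₂ : R₁ →+* T),
      g₁.comp (algebraMap R₀ R₁) = g₂.comp (algebraMap R₀ R₁) → g₁ = g₂)
    (T : Type u) [Ring T] (f₁ : R₁ →+* T) (f₂ : R₂ →+* T)
    (hcomp : f₁.comp (algebraMap R₀ R₁) = f₂.comp (algebraMap R₀ R₂)) :
    (∀ (x : R₁) (y : R₂), f₁ x * f₂ y = f₂ y * f₁ x) ∧
    (∃! F : (R₁ ⊗[R₀] R₂) →+* T,
      (∀ x : R₁, F (x ⊗ₜ[R₀] (1 : R₂)) = f₁ x) ∧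
      (∀ y : R₂, F ((1 : R₁) ⊗ₜ[R₀] y) = f₂ y)) := by
  have hcomm : ∀ x y, Commute (f₁ x) (f₂ y) := fun x y =>
    (RingHom.IsEpi.commute_map hepi f₁ (fun r => by
      rw [← RingHom.comp_apply, hcomp, RingHom.comp_apply]
      exact ((Algebra.commute_algebraMap_left r y).map f₂).symm) x).symm
  refine ⟨hcomm, Algebra.TensorProduct.liftRingHom f₁ f₂ hcomp hcomm, by simp, ?_⟩
  rintro F ⟨hF₁, hF₂⟩
  exact Algebra.TensorProduct.ringHom_ext (RingHom.ext fun x => by simp [hF₁])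
    (RingHom.ext fun y => by simp [hF₂])
end

section
/- Let I be a set of prime natural numbers. Consider the map Θ_I : ℚ ⊗_ℤ (∏_{p ∈ I} ℤ_p) → ∏_{p ∈ I} ℚ_p determined by q ⊗ (x_p)_{p ∈ I} ↦ (q·x_p)_{p ∈ I}, using the inclusions ℤ_p ⊆ ℚ_p and ℚ ⊆ ℚ_p. Then Θ_I is an injective ring homomorphism, and its image is exactly the set of tuples (y_p)_{p ∈ I} ∈ ∏_{p ∈ I} ℚ_p such that y_p ∈ ℤ_p (equivalently ‖y_p‖_p ≤ 1) for all but finitely many p ∈ I. -/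
open TensorProduct

/-!
Every element of `ℚ ⊗[ℤ] M` has the form `n⁻¹ ⊗ m` with `n ≠ 0`. Hence `Θ_I` is injective
(`n⁻¹ * m_p = 0` forces `m_p = 0`), and `Θ_I (n⁻¹ ⊗ m)` is integral at every prime not
dividing `n`. Conversely, if `y` is integral outside a finite set `S`, choose `k_p` with
`p ^ k_p * y_p` integral; then `n = ∏_{p ∈ S} p ^ k_p` clears all denominators of `y`, and
`y = Θ_I (n⁻¹ ⊗ n y)`.
-/

theorem TensorProduct.exists_eq_inv_natCast_tmul {M : Type*} [AddCommGroup M]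
    (z : ℚ ⊗[ℤ] M) : ∃ (n : ℕ) (m : M), n ≠ 0 ∧ z = (n⁻¹ : ℚ) ⊗ₜ m := by
  induction z using TensorProduct.induction_on with
  | zero => exact ⟨1, 0, one_ne_zero, by simp⟩
  | tmul q m =>
    refine ⟨q.den, q.num • m, q.den_nz, ?_⟩
    rw [← smul_tmul, zsmul_eq_mul, ← div_eq_mul_inv, Rat.num_div_den]
  | add x y hx hy =>
    obtain ⟨a, m, ha, rfl⟩ := hx
    obtain ⟨b, m', hb, rfl⟩ := hy
    refine ⟨a * b, (b : ℤ) • m + (a : ℤ) • m', mul_ne_zero ha hb, ?_⟩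
    rw [tmul_add, ← smul_tmul, ← smul_tmul]
    congr 2 <;> (simp only [zsmul_eq_mul]; push_cast; field_simp)

namespace Padic

variable {p : ℕ} [Fact p.Prime]

theorem exists_pow_mul_norm_le_one (y : ℚ_[p]) : ∃ k : ℕ, ‖(p : ℚ_[p]) ^ k * y‖ ≤ 1 := by
  have hp : (1 : ℝ) < p := mod_cast (Fact.out : p.Prime).one_lt
  obtain ⟨k, hk⟩ := pow_unbounded_of_one_lt ‖y‖ hp
  refine ⟨k, ?_⟩
  rw [norm_mul, norm_pow, norm_p, inv_pow, inv_mul_le_iff₀ (by positivity), mul_one]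
  exact hk.le

theorem norm_natCast_mul_le_one_of_pow_dvd {y : ℚ_[p]} {k n : ℕ}
    (hk : ‖(p : ℚ_[p]) ^ k * y‖ ≤ 1) (hn : p ^ k ∣ n) : ‖(n : ℚ_[p]) * y‖ ≤ 1 := by
  obtain ⟨m, rfl⟩ := hn
  rw [show ((p ^ k * m : ℕ) : ℚ_[p]) * y = m * ((p : ℚ_[p]) ^ k * y) by push_cast; ring,
    norm_mul]
  exact mul_le_one₀ (by simpa using norm_int_le_one (p := p) m) (norm_nonneg _) hk

theorem norm_inv_natCast_mul_le_one {n : ℕ} (hn : ¬ p ∣ n) (x : ℤ_[p]) :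
    ‖((n⁻¹ : ℚ) : ℚ_[p]) * x‖ ≤ 1 := by
  have hn_norm : ‖(n : ℚ_[p])‖ = 1 :=
    norm_natCast_eq_one_iff.2 ((Fact.out : p.Prime).coprime_iff_not_dvd.2 hn)
  rw [norm_mul, Rat.cast_inv, Rat.cast_natCast, norm_inv, hn_norm, inv_one, one_mul]
  exact x.2

end Padic

theorem exists_natCast_mul_norm_le_one {ι : Type*} {p : ι → ℕ} [∀ i, Fact (p i).Prime]
    {y : (i : ι) → ℚ_[p i]} (hy : {i | ¬ ‖y i‖ ≤ 1}.Finite) :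
    ∃ n : ℕ, n ≠ 0 ∧ ∀ i, ‖(n : ℚ_[p i]) * y i‖ ≤ 1 := by
  choose k hk using fun i => Padic.exists_pow_mul_norm_le_one (y i)
  refine ⟨∏ i ∈ hy.toFinset, p i ^ k i,
    Finset.prod_ne_zero_iff.2 fun i _ => pow_ne_zero _ (Fact.out : (p i).Prime).ne_zero,
    fun i => ?_⟩
  by_cases hi : i ∈ hy.toFinset
  · exact Padic.norm_natCast_mul_le_one_of_pow_dvd (hk i)
      (Finset.dvd_prod_of_mem (fun i => p i ^ k i) hi)
  · refine Padic.norm_natCast_mul_le_one_of_pow_dvd (k := 0) ?_ (by simp)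
    simpa using hy.mem_toFinset.not.1 hi

section

variable (I : Set ℕ) [∀ p : I, Fact (p : ℕ).Prime]

/-- The map `Θ_I`. -/
noncomputable def padicTensorMap :
    ℚ ⊗[ℤ] ((p : I) → ℤ_[(p : ℕ)]) →ₐ[ℤ] (p : I) → ℚ_[(p : ℕ)] :=
  Algebra.TensorProduct.productMap (algebraMap ℚ _).toIntAlgHom
    (RingHom.pi fun p => PadicInt.Coe.ringHom.comp (Pi.evalRingHom _ p)).toIntAlgHom

theorem padicTensorMap_tmul (q : ℚ) (x : (p : I) → ℤ_[(p : ℕ)]) :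
    padicTensorMap I (q ⊗ₜ x) = fun p : I => (q : ℚ_[(p : ℕ)]) * (x p : ℚ_[(p : ℕ)]) := by
  funext p
  exact congrArg (· * _) (eq_ratCast (algebraMap ℚ ℚ_[(p : ℕ)]) q)

theorem padicTensorMap_injective : Function.Injective (padicTensorMap I) := by
  rw [injective_iff_map_eq_zero]
  intro z hz
  obtain ⟨n, m, hn, rfl⟩ := TensorProduct.exists_eq_inv_natCast_tmul z
  suffices m = 0 by rw [this, tmul_zero]
  funext p
  have hp := congrFun hz p
  rw [padicTensorMap_tmul] at hp
  have hn' : ((n⁻¹ : ℚ) : ℚ_[(p : ℕ)]) ≠ 0 := by simpa using hn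
  exact PadicInt.coe_eq_zero.1 ((mul_eq_zero.1 hp).resolve_left hn')

theorem range_padicTensorMap :
    Set.range (padicTensorMap I) = {y | {p : I | ¬ ‖y p‖ ≤ 1}.Finite} := by
  ext y
  constructor
  · rintro ⟨z, rfl⟩
    obtain ⟨n, m, hn, rfl⟩ := TensorProduct.exists_eq_inv_natCast_tmul z
    refine ((Nat.divisors n).finite_toSet.preimage Subtype.val_injective.injOn).subset ?_
    intro p hp
    rw [padicTensorMap_tmul] at hp
    exact Nat.mem_divisors.2
      ⟨not_imp_comm.1 (Padic.norm_inv_natCast_mul_le_one · (m p)) hp, hn⟩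
  · intro hy
    obtain ⟨n, hn, hny⟩ := exists_natCast_mul_norm_le_one hy
    refine ⟨(n⁻¹ : ℚ) ⊗ₜ (fun p => ⟨n * y p, hny p⟩ : (p : I) → ℤ_[(p : ℕ)]), ?_⟩
    refine (padicTensorMap_tmul I _ _).trans (funext fun p => ?_)
    change ((n⁻¹ : ℚ) : ℚ_[(p : ℕ)]) * (n * y p) = y p
    have hn' : (n : ℚ_[(p : ℕ)]) ≠ 0 := Nat.cast_ne_zero.2 hn
    rw [Rat.cast_inv, Rat.cast_natCast, inv_mul_cancel_left₀ hn']

end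

/-- Let `I` be a set of prime natural numbers.  The map
`Θ_I : ℚ ⊗_ℤ (∏_{p ∈ I} ℤ_p) → ∏_{p ∈ I} ℚ_p` determined by
`q ⊗ (x_p)_p ↦ (q · x_p)_p` is an injective ring homomorphism whose image is exactly
the set of tuples `(y_p)_p` with `‖y_p‖_p ≤ 1` (i.e. `y_p ∈ ℤ_p`) for all but finitely
many `p ∈ I`. -/
theorem stmt_10 (I : Set ℕ) [∀ p : I, Fact (Nat.Prime (p : ℕ))] :
    ∃ Θ : (ℚ ⊗[ℤ] ((p : I) → ℤ_[(p : ℕ)])) →+* ((p : I) → ℚ_[(p : ℕ)]),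
      (∀ (q : ℚ) (x : (p : I) → ℤ_[(p : ℕ)]),
          Θ (q ⊗ₜ[ℤ] x) = fun p : I => (q : ℚ_[(p : ℕ)]) * ((x p : ℤ_[(p : ℕ)]) : ℚ_[(p : ℕ)])) ∧
      Function.Injective Θ ∧
      Set.range Θ = {y | {p : I | ¬ ‖y p‖ ≤ 1}.Finite} :=
  ⟨(padicTensorMap I).toRingHom, padicTensorMap_tmul I, padicTensorMap_injective I,
    range_padicTensorMap I⟩
end

section
/- Let R be a ring and W a cochain complex of projective left R-modules with Wⁿ = 0 for all n ∉ {−1, 0}. Then for every cochain complex X of left R-modules and every integer n there is a short exact sequence of abelian groups 0 → Hom_{D(R)}(W, H^{n−1}(X)[1]) → Hom_{D(R)}(W, X[n]) → Hom_{D(R)}(W, Hⁿ(X)) → 0; that is, there exist group homomorphisms ι : Hom_{D(R)}(W, H^{n−1}(X)[1]) → Hom_{D(R)}(W, X[n]) and ρ : Hom_{D(R)}(W, X[n]) → Hom_{D(R)}(W, Hⁿ(X)) with ι injective, ρ surjective, and image of ι equal to the kernel of ρ. -/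
/-!
Being a bounded above complex of projectives, `W` is K-projective, so morphisms out of `W` in the
derived category are homotopy classes of chain maps. Put `Y = X[n]`. A chain map `f : W ⟶ Y` is a
pair `(f⁻¹, f⁰)` with `f⁰` landing in the cycles, and `ρ` sends it to the class of `f⁰` in
`H⁰(Y)`; morphisms `W ⟶ H⁰(Y)` are exactly the maps `W⁰ ⟶ H⁰(Y)` killed by `d : W⁻¹ ⟶ W⁰`.
If that class vanishes, `f⁰` is a boundary and `f` is homotopic to a map with `f⁰ = 0`, i.e. to a
map `W⁻¹ ⟶ Z⁻¹(Y)`. Such a map is null-homotopic exactly when its composite with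
`Z⁻¹(Y) ⟶ H⁻¹(Y)` factors through `d`, which is also the condition for the corresponding morphism
`W ⟶ H⁻¹(Y)[1]` to vanish.
-/

open CategoryTheory Category Limits Preadditive HomologicalComplex

lemma AddMonoidHom.exists_injective_exact_of_surjective_of_ker_eq {G A B C : Type*}
    [AddCommGroup G] [AddCommGroup A] [AddCommGroup B] [AddCommGroup C]
    (ψ : G →+ A) (φ : G →+ B) (ρ : B →+ C) (hψ : Function.Surjective ψ)
    (hker : ψ.ker = φ.ker) (hφρ : Function.Exact φ ρ) :
    ∃ ι : A →+ B, Function.Injective ι ∧ Function.Exact ι ρ := by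
  let e : A ≃+ G ⧸ φ.ker :=
    (QuotientAddGroup.quotientKerEquivOfSurjective ψ hψ).symm.trans
      (QuotientAddGroup.quotientAddEquivOfEq hker)
  have hιψ (g : G) : QuotientAddGroup.kerLift φ (e (ψ g)) = φ g := by
    have h : (QuotientAddGroup.quotientKerEquivOfSurjective ψ hψ).symm (ψ g) = g := by
      rw [AddEquiv.symm_apply_eq]
      rfl
    simp [e, h]
  refine ⟨(QuotientAddGroup.kerLift φ).comp e.toAddMonoidHom,
    (QuotientAddGroup.kerLift_injective φ).comp e.injective, fun b => ?_⟩
  rw [hφρ b]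
  constructor
  · rintro ⟨g, rfl⟩
    exact ⟨ψ g, hιψ g⟩
  · rintro ⟨a, rfl⟩
    obtain ⟨g, rfl⟩ := hψ a
    exact ⟨g, (hιψ g).symm⟩

lemma exists_injective_surjective_exact_of_addEquiv {A B C A' B' C' : Type*}
    [AddCommGroup A] [AddCommGroup B] [AddCommGroup C]
    [AddCommGroup A'] [AddCommGroup B'] [AddCommGroup C']
    (eA : A ≃+ A') (eB : B ≃+ B') (eC : C ≃+ C')
    (h : ∃ (ι : A →+ B) (ρ : B →+ C),
      Function.Injective ι ∧ Function.Surjective ρ ∧ Function.Exact ι ρ) :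
    ∃ (ι : A' →+ B') (ρ : B' →+ C'),
      Function.Injective ι ∧ Function.Surjective ρ ∧ Function.Exact ι ρ := by
  obtain ⟨ι, ρ, hι, hρ, hιρ⟩ := h
  refine ⟨(eB.toAddMonoidHom.comp ι).comp eA.symm.toAddMonoidHom,
    (eC.toAddMonoidHom.comp ρ).comp eB.symm.toAddMonoidHom,
    eB.injective.comp (hι.comp eA.symm.injective),
    eC.surjective.comp (hρ.comp eB.symm.surjective),
    Function.Exact.of_ladder_addEquiv_of_exact eA eB eC ?_ ?_ hιρ⟩ <;>
  ext <;> simp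

lemma HomologicalComplex.mkHomToSingle_add {C : Type*} [Category C] [Preadditive C]
    [HasZeroObject C] {ι : Type*} [DecidableEq ι] {c : ComplexShape ι}
    {K : HomologicalComplex C c} {j : ι} {A : C} (φ ψ : K.X j ⟶ A)
    (hφ : ∀ i, c.Rel i j → K.d i j ≫ φ = 0) (hψ : ∀ i, c.Rel i j → K.d i j ≫ ψ = 0) :
    mkHomToSingle (φ + ψ) (fun i hi => by rw [comp_add, hφ i hi, hψ i hi, add_zero]) =
      mkHomToSingle φ hφ + mkHomToSingle ψ hψ := by
  ext
  simp

lemma HomologicalComplex.exists_comp_toCycles_eq {C : Type*} [Category C] [Abelian C]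
    (Y : CochainComplex C ℤ) {P : C} [Projective P] {i j : ℤ} (hij : i + 1 = j)
    (u : P ⟶ Y.cycles j) (hu : u ≫ Y.homologyπ j = 0) :
    ∃ v : P ⟶ Y.X i, v ≫ Y.toCycles i j = u := by
  have hS : (ShortComplex.mk _ _ (Y.toCycles_comp_homologyπ i j)).Exact :=
    ShortComplex.exact_of_g_is_cokernel _
      (Y.homologyIsCokernel i j (by simp [CochainComplex.prev, ← hij]))
  exact ⟨hS.liftFromProjective u hu, hS.liftFromProjective_comp u hu⟩

namespace CochainComplex

variable {C : Type*} [Category C] [Abelian C]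

section TwoTerm

variable {W Y : CochainComplex C ℤ}

lemma homotopy_comm_neg_one {f g : W ⟶ Y} (h : Homotopy f g) :
    f.f (-1) = W.d (-1) 0 ≫ h.hom 0 (-1) + h.hom (-1) (-2) ≫ Y.d (-2) (-1) + g.f (-1) := by
  simpa [dNext_eq _ (show (ComplexShape.up ℤ).Rel (-1) 0 by simp),
    prevD_eq _ (show (ComplexShape.up ℤ).Rel (-2) (-1) by simp)] using h.comm (-1)

variable [W.IsStrictlyLE 0]

lemma comp_d_zero_one_eq_zero (f : W ⟶ Y) : f.f 0 ≫ Y.d 0 1 = 0 := by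
  rw [f.comm 0 1, (W.isZero_of_isStrictlyLE 0 1).eq_of_tgt (W.d 0 1) 0, zero_comp]

lemma homotopy_comm_zero {f g : W ⟶ Y} (h : Homotopy f g) :
    f.f 0 = h.hom 0 (-1) ≫ Y.d (-1) 0 + g.f 0 := by
  simpa [dNext_eq _ (show (ComplexShape.up ℤ).Rel 0 1 by simp),
    prevD_eq _ (show (ComplexShape.up ℤ).Rel (-1) 0 by simp),
    (W.isZero_of_isStrictlyLE 0 1).eq_of_src (h.hom 1 0) 0] using h.comm 0

variable [W.IsStrictlyGE (-1)]

variable (W) in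
lemma isZero_X_of_ne_neg_one_of_ne_zero {i : ℤ} (h₁ : i ≠ -1) (h₀ : i ≠ 0) :
    IsZero (W.X i) := by
  rcases lt_or_gt_of_ne h₀ with h | h
  · exact W.isZero_of_isStrictlyGE (-1) i (by omega)
  · exact W.isZero_of_isStrictlyLE 0 i h

lemma twoTerm_hom_ext {f g : W ⟶ Y} (h₁ : f.f (-1) = g.f (-1)) (h₀ : f.f 0 = g.f 0) :
    f = g := by
  ext i
  by_cases hi₁ : i = -1
  · subst hi₁; exact h₁
  by_cases hi₀ : i = 0
  · subst hi₀; exact h₀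
  exact (W.isZero_X_of_ne_neg_one_of_ne_zero hi₁ hi₀).eq_of_src _ _

def twoTermHomMk (v : W.X (-1) ⟶ Y.X (-1)) (u : W.X 0 ⟶ Y.X 0)
    (hv : v ≫ Y.d (-1) 0 = W.d (-1) 0 ≫ u) (hu : u ≫ Y.d 0 1 = 0) : W ⟶ Y where
  f i := if h : i = -1 then (W.XIsoOfEq h).hom ≫ v ≫ (Y.XIsoOfEq h).inv
    else if h₀ : i = 0 then (W.XIsoOfEq h₀).hom ≫ u ≫ (Y.XIsoOfEq h₀).inv else 0
  comm' i j (hij : i + 1 = j) := by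
    by_cases h : i = -1
    · obtain ⟨rfl, rfl⟩ : i = -1 ∧ j = 0 := ⟨h, by omega⟩
      simpa using hv
    by_cases h₀ : i = 0
    · obtain ⟨rfl, rfl⟩ : i = 0 ∧ j = 1 := ⟨h₀, by omega⟩
      simpa using hu
    exact (W.isZero_X_of_ne_neg_one_of_ne_zero h h₀).eq_of_src _ _

@[simp]
lemma twoTermHomMk_f_neg_one (v : W.X (-1) ⟶ Y.X (-1)) (u : W.X 0 ⟶ Y.X 0) (hv hu) :
    (twoTermHomMk v u hv hu).f (-1) = v := by
  simp [twoTermHomMk]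

@[simp]
lemma twoTermHomMk_f_zero (v : W.X (-1) ⟶ Y.X (-1)) (u : W.X 0 ⟶ Y.X 0) (hv hu) :
    (twoTermHomMk v u hv hu).f 0 = u := by
  simp [twoTermHomMk]

def twoTermNullHomotopy (f : W ⟶ Y) (t₀ : W.X 0 ⟶ Y.X (-1)) (t₁ : W.X (-1) ⟶ Y.X (-2))
    (h₀ : f.f 0 = t₀ ≫ Y.d (-1) 0) (h₁ : f.f (-1) = W.d (-1) 0 ≫ t₀ + t₁ ≫ Y.d (-2) (-1)) :
    Homotopy f 0 where
  hom i j := if h : i = 0 ∧ j = -1 then (W.XIsoOfEq h.1).hom ≫ t₀ ≫ (Y.XIsoOfEq h.2).inv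
    else if h' : i = -1 ∧ j = -2 then (W.XIsoOfEq h'.1).hom ≫ t₁ ≫ (Y.XIsoOfEq h'.2).inv
    else 0
  zero i j hij := by
    rw [dif_neg (by rintro ⟨rfl, rfl⟩; exact hij (by simp)),
      dif_neg (by rintro ⟨rfl, rfl⟩; exact hij (by simp))]
  comm i := by
    by_cases h₀ : i = 0
    · subst h₀
      rw [dNext_eq _ (show (ComplexShape.up ℤ).Rel 0 1 by simp),
        prevD_eq _ (show (ComplexShape.up ℤ).Rel (-1) 0 by simp)]
      simpa using h₀
    by_cases h₁ : i = -1
    · subst h₁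
      rw [dNext_eq _ (show (ComplexShape.up ℤ).Rel (-1) 0 by simp),
        prevD_eq _ (show (ComplexShape.up ℤ).Rel (-2) (-1) by simp)]
      simpa using h₁
    exact (W.isZero_X_of_ne_neg_one_of_ne_zero h₁ h₀).eq_of_src _ _

end TwoTerm

open DerivedCategory

variable [HasDerivedCategory C]

namespace IsKProjective

variable {K L : CochainComplex C ℤ} [K.IsKProjective]

lemma Q_map_surjective : Function.Surjective (Q.map : (K ⟶ L) → (Q.obj K ⟶ Q.obj L)) := by
  intro φ
  obtain ⟨ψ, hψ⟩ := (Qh_map_bijective K _).surjective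
    ((quotientCompQhIso C).hom.app K ≫ φ ≫ (quotientCompQhIso C).inv.app L)
  obtain ⟨f, rfl⟩ := (HomotopyCategory.quotient C _).map_surjective ψ
  refine ⟨f, ?_⟩
  rw [← cancel_mono ((quotientCompQhIso C).inv.app L), quotientCompQhIso_inv_naturality, hψ,
    Iso.inv_hom_id_app_assoc]

lemma Q_map_eq_zero_iff (f : K ⟶ L) : Q.map f = 0 ↔ Nonempty (Homotopy f 0) := by
  have h : Qh.map ((HomotopyCategory.quotient C _).map f) =
      (quotientCompQhIso C).hom.app K ≫ Q.map f ≫ (quotientCompQhIso C).inv.app L := by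
    rw [quotientCompQhIso_inv_naturality, Iso.hom_inv_id_app_assoc]
  rw [← HomotopyCategory.quotient_map_eq_zero_iff,
    ← (Qh_map_bijective K _).injective.eq_iff, Functor.map_zero, h,
    IsIso.comp_left_eq_zero, IsIso.comp_right_eq_zero]

end IsKProjective

noncomputable section

variable {W : CochainComplex C ℤ}

def toSingleZeroHom (M : C) :
    (leftComp M (W.d (-1) 0)).ker →+ (Q.obj W ⟶ Q.obj ((single C (.up ℤ) 0).obj M)) :=
  AddMonoidHom.mk'
    (fun g => Q.map (mkHomToSingle g.1 (fun i hi => by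
      obtain rfl : i = -1 := by simp at hi; omega
      exact g.2)))
    (fun g g' => by rw [← Functor.map_add, ← mkHomToSingle_add]; rfl)

def toSingleNegOneHom [W.IsStrictlyGE (-1)] (M : C) :
    (W.X (-1) ⟶ M) →+ (Q.obj W ⟶ Q.obj ((single C (.up ℤ) (-1)).obj M)) :=
  AddMonoidHom.mk'
    (fun g => Q.map (mkHomToSingle g (fun i hi =>
      (W.isZero_of_isStrictlyGE (-1) i (by simp at hi; omega)).eq_of_src _ _)))
    (fun g g' => by rw [← Functor.map_add, ← mkHomToSingle_add])

def homologyZeroHom [W.IsStrictlyLE 0] (Y : CochainComplex C ℤ) :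
    (Q.obj W ⟶ Q.obj Y) →+ (leftComp (Y.homology 0) (W.d (-1) 0)).ker :=
  AddMonoidHom.mk'
    (fun φ => ⟨W.liftCycles (𝟙 _) 1 (by simp)
        (by rw [id_comp]; exact (W.isZero_of_isStrictlyLE 0 1).eq_of_tgt _ _) ≫ W.homologyπ 0 ≫
        (homologyFunctorFactors C 0).inv.app W ≫ (homologyFunctor C 0).map φ ≫
          (homologyFunctorFactors C 0).hom.app Y, by
      change W.d (-1) 0 ≫ _ = 0
      rw [comp_liftCycles_assoc, W.liftCycles_homologyπ_eq_zero_of_boundary_assoc _ 1 _ (𝟙 _)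
        (by simp), zero_comp]⟩)
    (fun φ ψ => by
      ext
      simp only [AddSubgroup.coe_add, Functor.map_add]
      erw [Preadditive.add_comp, Preadditive.comp_add, Preadditive.comp_add, Preadditive.comp_add])

lemma coe_homologyZeroHom_Q_map [W.IsStrictlyLE 0] {Y : CochainComplex C ℤ} (f : W ⟶ Y) :
    (homologyZeroHom Y (Q.map f) : W.X 0 ⟶ Y.homology 0) =
      Y.liftCycles (f.f 0) 1 (by simp) (comp_d_zero_one_eq_zero f) ≫ Y.homologyπ 0 := by
  have hnat : (homologyFunctorFactors C 0).inv.app W ≫ (homologyFunctor C 0).map (Q.map f) ≫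
      (homologyFunctorFactors C 0).hom.app Y = homologyMap f 0 :=
    NatIso.naturality_1 _ _
  change _ ≫ _ ≫ _ ≫ _ ≫ _ = _
  erw [hnat]
  rw [homologyπ_naturality, liftCycles_comp_cyclesMap_assoc]
  simp

lemma homologyZeroHom_surjective [W.IsStrictlyGE (-1)] [W.IsStrictlyLE 0] [Projective (W.X (-1))]
    [Projective (W.X 0)] (Y : CochainComplex C ℤ) :
    Function.Surjective (homologyZeroHom (W := W) Y) := by
  rintro ⟨g, hg : W.d (-1) 0 ≫ g = 0⟩
  obtain ⟨g₀, rfl⟩ : ∃ g₀, g₀ ≫ Y.homologyπ 0 = g :=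
    ⟨Projective.factorThru g (Y.homologyπ 0), Projective.factorThru_comp _ _⟩
  obtain ⟨v, hv⟩ := Y.exists_comp_toCycles_eq (show (-1 : ℤ) + 1 = 0 by simp)
    (W.d (-1) 0 ≫ g₀) (by rw [assoc, hg])
  refine ⟨Q.map (twoTermHomMk v (g₀ ≫ Y.iCycles 0)
    (by rw [← Y.toCycles_i, reassoc_of% hv]) (by simp)), Subtype.ext ?_⟩
  rw [coe_homologyZeroHom_Q_map]
  congr 1
  simp [← cancel_mono (Y.iCycles 0)]

def cyclesNegOneHom [W.IsStrictlyGE (-1)] [W.IsStrictlyLE 0] (Y : CochainComplex C ℤ) :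
    (W.X (-1) ⟶ Y.cycles (-1)) →+ (Q.obj W ⟶ Q.obj Y) :=
  AddMonoidHom.mk'
    (fun g => Q.map (twoTermHomMk (g ≫ Y.iCycles (-1)) 0 (by simp) (by simp)))
    (fun g g' => by
      rw [← Functor.map_add]
      exact congrArg Q.map (twoTerm_hom_ext (by simp) (by simp)))

variable [W.IsKProjective]

lemma toSingleZeroHom_bijective [W.IsStrictlyLE 0] (M : C) :
    Function.Bijective (toSingleZeroHom (W := W) M) := by
  refine ⟨(injective_iff_map_eq_zero _).2 fun g hg => ?_, fun φ => ?_⟩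
  · obtain ⟨h⟩ := (IsKProjective.Q_map_eq_zero_iff _).1 hg
    have := homotopy_comm_zero h
    simp only [mkHomToSingle_f, single_obj_d, comp_zero, zero_add, zero_f_apply] at this
    refine Subtype.ext ?_
    rw [← cancel_mono (singleObjXSelf (.up ℤ) 0 M).inv]
    simpa using this
  · obtain ⟨f, rfl⟩ := IsKProjective.Q_map_surjective φ
    have hg : W.d (-1) 0 ≫ f.f 0 ≫ (singleObjXSelf (.up ℤ) 0 M).hom = 0 := by
      simp [← f.comm_assoc]
    refine ⟨⟨_, hg⟩, congrArg Q.map (to_single_hom_ext ?_)⟩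
    simp

lemma toSingleNegOneHom_surjective [W.IsStrictlyGE (-1)] (M : C) :
    Function.Surjective (toSingleNegOneHom (W := W) M) := by
  intro φ
  obtain ⟨f, rfl⟩ := IsKProjective.Q_map_surjective φ
  exact ⟨f.f (-1) ≫ (singleObjXSelf (.up ℤ) (-1) M).hom,
    congrArg Q.map (to_single_hom_ext (by simp))⟩

variable [W.IsStrictlyGE (-1)] [W.IsStrictlyLE 0]

lemma ker_toSingleNegOneHom (M : C) :
    (toSingleNegOneHom (W := W) M).ker = (leftComp M (W.d (-1) 0)).range := by
  ext g
  rw [AddMonoidHom.mem_ker, toSingleNegOneHom, AddMonoidHom.mk'_apply,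
    IsKProjective.Q_map_eq_zero_iff]
  constructor
  · rintro ⟨h⟩
    have := homotopy_comm_neg_one h
    simp only [Int.reduceNeg, mkHomToSingle_f, single_obj_d, comp_zero, add_zero,
      zero_f] at this
    refine ⟨h.hom 0 (-1) ≫ (singleObjXSelf (.up ℤ) (-1) M).hom, ?_⟩
    change W.d (-1) 0 ≫ _ ≫ _ = g
    rw [← reassoc_of% this, Iso.inv_hom_id, comp_id]
  · rintro ⟨k, rfl⟩
    exact ⟨twoTermNullHomotopy _ (k ≫ (singleObjXSelf (.up ℤ) (-1) M).inv) 0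
      ((isZero_single_obj_X _ _ _ _ (by simp)).eq_of_tgt _ _) (by simp [leftComp])⟩

variable (Y : CochainComplex C ℤ) [Projective (W.X 0)]

lemma range_cyclesNegOneHom :
    (cyclesNegOneHom Y).range = (homologyZeroHom (W := W) Y).ker := by
  refine le_antisymm ?_ fun φ hφ => ?_
  · rintro _ ⟨g, rfl⟩
    refine Subtype.ext ?_
    rw [cyclesNegOneHom, AddMonoidHom.mk'_apply, coe_homologyZeroHom_Q_map]
    exact Y.liftCycles_homologyπ_eq_zero_of_boundary _ 1 _ (0 : W.X 0 ⟶ Y.X (-1)) (by simp)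
  obtain ⟨f, rfl⟩ := IsKProjective.Q_map_surjective φ
  replace hφ := congrArg Subtype.val hφ
  rw [coe_homologyZeroHom_Q_map] at hφ
  obtain ⟨h, hh⟩ := Y.exists_comp_toCycles_eq (show (-1 : ℤ) + 1 = 0 by simp) _ hφ
  replace hh : h ≫ Y.d (-1) 0 = f.f 0 := by simpa using hh =≫ Y.iCycles 0
  refine ⟨Y.liftCycles (f.f (-1) - W.d (-1) 0 ≫ h) 0 (by simp)
    (by simp [f.comm, hh]), (sub_eq_zero.1 ?_).symm⟩
  rw [cyclesNegOneHom, AddMonoidHom.mk'_apply, ← Functor.map_sub,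
    IsKProjective.Q_map_eq_zero_iff]
  exact ⟨twoTermNullHomotopy _ h 0 (by simp [hh]) (by simp)⟩

variable [Projective (W.X (-1))]

lemma cyclesNegOneHom_eq_zero_iff (g : W.X (-1) ⟶ Y.cycles (-1)) :
    cyclesNegOneHom Y g = 0 ↔ g ≫ Y.homologyπ (-1) ∈ (leftComp _ (W.d (-1) 0)).range := by
  rw [cyclesNegOneHom, AddMonoidHom.mk'_apply, IsKProjective.Q_map_eq_zero_iff]
  constructor
  · rintro ⟨h⟩
    have h₀ := homotopy_comm_zero h
    have h₁ := homotopy_comm_neg_one h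
    simp only [twoTermHomMk_f_zero, twoTermHomMk_f_neg_one, zero_f, add_zero] at h₀ h₁
    refine ⟨Y.liftCycles (h.hom 0 (-1)) 0 (by simp) h₀.symm ≫ Y.homologyπ (-1), ?_⟩
    have hg : g = W.d (-1) 0 ≫ Y.liftCycles (h.hom 0 (-1)) 0 (by simp) h₀.symm +
        h.hom (-1) (-2) ≫ Y.toCycles (-2) (-1) := by
      simp [← cancel_mono (Y.iCycles (-1)), h₁]
    simp [leftComp, hg]
  · rintro ⟨k, hk : W.d (-1) 0 ≫ k = g ≫ Y.homologyπ (-1)⟩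
    obtain ⟨k₀, rfl⟩ : ∃ k₀, k₀ ≫ Y.homologyπ (-1) = k :=
      ⟨Projective.factorThru k (Y.homologyπ (-1)), Projective.factorThru_comp _ _⟩
    obtain ⟨v, hv⟩ := Y.exists_comp_toCycles_eq (show (-2 : ℤ) + 1 = -1 by simp)
      (g - W.d (-1) 0 ≫ k₀) (by simp [hk])
    exact ⟨twoTermNullHomotopy _ (k₀ ≫ Y.iCycles (-1)) v (by simp)
      (by rw [twoTermHomMk_f_neg_one, ← Y.toCycles_i (-2) (-1), reassoc_of% hv]; simp)⟩

theorem exists_shortExact_homology :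
    ∃ (ι : (Q.obj W ⟶ Q.obj ((single C (.up ℤ) (-1)).obj (Y.homology (-1)))) →+
        (Q.obj W ⟶ Q.obj Y))
      (ρ : (Q.obj W ⟶ Q.obj Y) →+ (Q.obj W ⟶ Q.obj ((single C (.up ℤ) 0).obj (Y.homology 0)))),
      Function.Injective ι ∧ Function.Surjective ρ ∧ Function.Exact ι ρ := by
  let ρ := (toSingleZeroHom (W := W) (Y.homology 0)).comp (homologyZeroHom Y)
  let ψ := (toSingleNegOneHom (W := W) (Y.homology (-1))).comp (rightComp _ (Y.homologyπ (-1)))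
  have hψ : Function.Surjective ψ := (toSingleNegOneHom_surjective _).comp fun k =>
    ⟨Projective.factorThru k (Y.homologyπ (-1)), Projective.factorThru_comp _ _⟩
  have hker : ψ.ker = (cyclesNegOneHom Y).ker := by
    ext g
    rw [AddMonoidHom.mem_ker, AddMonoidHom.mem_ker, cyclesNegOneHom_eq_zero_iff,
      ← ker_toSingleNegOneHom]
    rfl
  have hexact : Function.Exact (cyclesNegOneHom Y) ρ := fun φ => by
    rw [AddMonoidHom.comp_apply, map_eq_zero_iff _ (toSingleZeroHom_bijective _).injective,
      ← AddMonoidHom.mem_ker, ← range_cyclesNegOneHom]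
    rfl
  obtain ⟨ι, hι, hιρ⟩ :=
    AddMonoidHom.exists_injective_exact_of_surjective_of_ker_eq ψ _ ρ hψ hker hexact
  exact ⟨ι, ρ, hι, (toSingleZeroHom_bijective _).surjective.comp (homologyZeroHom_surjective Y),
    hιρ⟩

end

end CochainComplex

universe w u

/-- Let `R` be a ring and `W` a cochain complex of projective left `R`-modules with
`Wⁿ = 0` for `n ∉ {-1, 0}`.  Then for every cochain complex `X` of `R`-modules and every
integer `n` there is a short exact sequence of abelian groups
`0 → Hom_{D(R)}(W, H^{n-1}(X)[1]) → Hom_{D(R)}(W, X[n]) → Hom_{D(R)}(W, Hⁿ(X)) → 0`. -/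
theorem stmt_12 {R : Type u} [Ring R] [HasDerivedCategory.{w} (ModuleCat.{u} R)]
    (W : CochainComplex (ModuleCat.{u} R) ℤ)
    (hproj : ∀ n : ℤ, Projective (W.X n))
    (hzero : ∀ n : ℤ, n ≠ -1 → n ≠ 0 → IsZero (W.X n))
    (X : CochainComplex (ModuleCat.{u} R) ℤ) (n : ℤ) :
    ∃ (ι : ((DerivedCategory.Q.obj W) ⟶
          (((DerivedCategory.singleFunctor (ModuleCat.{u} R) 0).obj
            (X.homology (n - 1)))⟦(1 : ℤ)⟧)) →+
        ((DerivedCategory.Q.obj W) ⟶ ((DerivedCategory.Q.obj X)⟦n⟧)))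
      (ρ : ((DerivedCategory.Q.obj W) ⟶ ((DerivedCategory.Q.obj X)⟦n⟧)) →+
        ((DerivedCategory.Q.obj W) ⟶
          ((DerivedCategory.singleFunctor (ModuleCat.{u} R) 0).obj (X.homology n)))),
    Function.Injective ι ∧ Function.Surjective ρ ∧ Function.Exact ι ρ := by
  have : W.IsStrictlyGE (-1) :=
    (W.isStrictlyGE_iff (-1)).2 fun i hi => hzero i (by omega) (by omega)
  have : W.IsStrictlyLE 0 := (W.isStrictlyLE_iff 0).2 fun i hi => hzero i (by omega) (by omega)
  have : W.IsKProjective := W.isKProjective_of_projective 0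
  let H := (HomologicalComplex.homologyFunctor (ModuleCat.{u} R) (ComplexShape.up ℤ) 0).shiftIso n
  let homCongr {Y Y' : DerivedCategory (ModuleCat.{u} R)} (e : Y ≅ Y') :=
    (Linear.homCongr ℤ (Iso.refl (DerivedCategory.Q.obj W)) e).toAddEquiv
  exact exists_injective_surjective_exact_of_addEquiv
    (homCongr ((DerivedCategory.singleFunctor _ (-1)).mapIso ((H (-1) (n - 1) (by omega)).app X) ≪≫
      (((DerivedCategory.singleFunctors _).shiftIso 1 (-1) 0 (by omega)).app _).symm))
    (homCongr ((DerivedCategory.Q.commShiftIso n).app X))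
    (homCongr ((DerivedCategory.singleFunctor _ 0).mapIso ((H 0 n (by omega)).app X)))
    (CochainComplex.exists_shortExact_homology (W := W) _)
end

section
/- Assume moreover that Tor₁^R(S, S) = 0. Then the ring homomorphism λ' : S' → S ⊗_R S' sending f to 1 ⊗ f is a ring epimorphism, i.e. for every ring T and every pair of ring homomorphisms g₁, g₂ : S ⊗_R S' → T with g₁ ∘ λ' = g₂ ∘ λ' one has g₁ = g₂. -/
open CategoryTheory TensorProduct

universe u

/-- Epimorphisms of rings are stable under base change: ring maps out of `A ⊗[R] B` are determined
by their restrictions to `A` and `B`, and on `A` the restriction is in turn determined by its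
restriction to `R`, which factors through `B`. -/
theorem Algebra.TensorProduct.ringHom_eq_of_comp_includeRight_eq {R A B T : Type*}
    [CommSemiring R] [Semiring A] [Algebra R A] [Semiring B] [Algebra R B] [Semiring T]
    (hepi : ∀ g₁ g₂ : A →+* T, g₁.comp (algebraMap R A) = g₂.comp (algebraMap R A) → g₁ = g₂)
    {g₁ g₂ : A ⊗[R] B →+* T}
    (h : g₁.comp includeRight.toRingHom = g₂.comp includeRight.toRingHom) : g₁ = g₂ := by
  refine ringHom_ext (hepi _ _ ?_) h
  rw [RingHom.comp_assoc, RingHom.comp_assoc, includeLeftRingHom_comp_algebraMap,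
    ← RingHom.comp_assoc, ← RingHom.comp_assoc, h]

theorem stmt_16_general {R S : Type u} [CommRing R] [CommRing S] [Algebra R S]
    (hepi : ∀ (T : Type u) [Ring T] (g₁ g₂ : S →+* T),
      g₁.comp (algebraMap R S) = g₂.comp (algebraMap R S) → g₁ = g₂) :
    ∀ (T : Type u) [Ring T]
      (g₁ g₂ : (S ⊗[R] Module.End R (S ⧸ LinearMap.range (Algebra.linearMap R S))) →+* T),
      g₁.comp (Algebra.TensorProduct.includeRight :
          Module.End R (S ⧸ LinearMap.range (Algebra.linearMap R S)) →ₐ[R]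
            S ⊗[R] Module.End R (S ⧸ LinearMap.range (Algebra.linearMap R S))).toRingHom
        = g₂.comp (Algebra.TensorProduct.includeRight :
          Module.End R (S ⧸ LinearMap.range (Algebra.linearMap R S)) →ₐ[R]
            S ⊗[R] Module.End R (S ⧸ LinearMap.range (Algebra.linearMap R S))).toRingHom
      → g₁ = g₂ :=
  fun T _ _ _ ↦ Algebra.TensorProduct.ringHom_eq_of_comp_includeRight_eq (hepi T)

/-- Let `λ = algebraMap R S` be an injective ring epimorphism between commutative rings
with `Tor₁^R(S, S) = 0`.  Write `S/R` for the quotient `R`-module `S ⧸ λ(R)` and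
`S' = End_R(S/R)`.  Then the ring homomorphism `λ' : S' → S ⊗_R S'`, `f ↦ 1 ⊗ f`,
is a ring epimorphism: any two ring homomorphisms out of `S ⊗_R S'` agreeing after
composition with `λ'` are equal. -/
theorem stmt_16 {R S : Type u} [CommRing R] [CommRing S] [Algebra R S]
    (hinj : Function.Injective (algebraMap R S))
    (hepi : ∀ (T : Type u) [Ring T] (g₁ g₂ : S →+* T),
      g₁.comp (algebraMap R S) = g₂.comp (algebraMap R S) → g₁ = g₂)
    (htor : Limits.IsZero
      (((Tor (ModuleCat.{u} R) 1).obj (ModuleCat.of R S)).obj (ModuleCat.of R S))) :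
    ∀ (T : Type u) [Ring T]
      (g₁ g₂ : (S ⊗[R] Module.End R (S ⧸ LinearMap.range (Algebra.linearMap R S))) →+* T),
      g₁.comp (Algebra.TensorProduct.includeRight :
          Module.End R (S ⧸ LinearMap.range (Algebra.linearMap R S)) →ₐ[R]
            S ⊗[R] Module.End R (S ⧸ LinearMap.range (Algebra.linearMap R S))).toRingHom
        = g₂.comp (Algebra.TensorProduct.includeRight :
          Module.End R (S ⧸ LinearMap.range (Algebra.linearMap R S)) →ₐ[R]
            S ⊗[R] Module.End R (S ⧸ LinearMap.range (Algebra.linearMap R S))).toRingHom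
      → g₁ = g₂ :=
  stmt_16_general hepi
end
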